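/- arXiv:2403.10416 — 5 statements merged into one kernel-verified Lean document; each statement's English description precedes it below -/
import Mathlib

section
/- Let d ≥ 1 and 1 ≤ k ≤ d, and let A ∈ ℝ^{d×d}. Then ‖A‖_{F,k,k} equals the maximum of ⟨A, B⟩ = tr(A^T B) over all matrices B ∈ ℝ^{d×d} with ‖B‖_F = 1 that have at most k nonzero rows, each of which has at most k nonzero entries; moreover this maximum is attained. -/
open Real

noncomputable section

/-- A vector is `k`-sparse if it has at most `k` nonzero coordinates. -/
def IsSparse {d : ℕ} (k : ℕ) (v : Fin d → ℝ) : Prop := (Function.support v).ncard ≤ k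

/-- Euclidean norm on `ℝ^d`. -/
def euclNorm {d : ℕ} (x : Fin d → ℝ) : ℝ := Real.sqrt (∑ i, (x i)^2)

/-- Sparse Euclidean norm: `‖x‖_{2,k} = sup { vᵀx : ‖v‖₂ ≤ 1, v k-sparse }`. -/
def sparseNorm {d : ℕ} (k : ℕ) (x : Fin d → ℝ) : ℝ :=
  sSup { r : ℝ | ∃ v : Fin d → ℝ, euclNorm v ≤ 1 ∧ IsSparse k v ∧ r = ∑ i, v i * x i }

/-- Frobenius norm of a matrix. -/
def matFrob {d : ℕ} (A : Matrix (Fin d) (Fin d) ℝ) : ℝ := Real.sqrt (∑ i, ∑ j, (A i j)^2)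

/-- Trace inner product `⟨A,B⟩ = tr(AᵀB)`. -/
def matInner {d : ℕ} (A B : Matrix (Fin d) (Fin d) ℝ) : ℝ := ∑ i, ∑ j, A i j * B i j

/-- A matrix has at most `k` nonzero rows, each of which has at most `k` nonzero entries. -/
def RowSparse {d : ℕ} (k : ℕ) (B : Matrix (Fin d) (Fin d) ℝ) : Prop :=
  ({i | B i ≠ 0} : Set (Fin d)).ncard ≤ k ∧ ∀ i, (Function.support (B i)).ncard ≤ k

/-- The `(F,k,k)` norm:
`‖A‖_{F,k,k} = sqrt( max_{S ⊆ [d], |S| = k} ∑_{i ∈ S} ‖A_i‖_{2,k}² )`. -/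
def fkkNorm {d : ℕ} (k : ℕ) (A : Matrix (Fin d) (Fin d) ℝ) : ℝ :=
  Real.sqrt (sSup { r : ℝ |
    ∃ S : Finset (Fin d), S.card = k ∧ r = ∑ i ∈ S, (sparseNorm k (A i))^2 })

namespace FkkAux

variable {d k : ℕ}

/-- Cauchy–Schwarz with square roots. -/
lemma cs_sqrt (T : Finset (Fin d)) (v x : Fin d → ℝ) :
    ∑ i ∈ T, v i * x i ≤ Real.sqrt (∑ i ∈ T, (v i)^2) * Real.sqrt (∑ i ∈ T, (x i)^2) := by
  have h := Finset.sum_mul_sq_le_sq_mul_sq T v x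
  calc ∑ i ∈ T, v i * x i ≤ |∑ i ∈ T, v i * x i| := le_abs_self _
    _ = Real.sqrt ((∑ i ∈ T, v i * x i)^2) := (Real.sqrt_sq_eq_abs _).symm
    _ ≤ Real.sqrt ((∑ i ∈ T, (v i)^2) * ∑ i ∈ T, (x i)^2) := Real.sqrt_le_sqrt h
    _ = _ := Real.sqrt_mul (by positivity) _

lemma sum_ite_univ (S : Finset (Fin d)) (g : Fin d → ℝ) :
    ∑ i, (if i ∈ S then g i else 0) = ∑ i ∈ S, g i := by
  rw [← Finset.sum_subset S.subset_univ (fun i _ hi => if_neg hi)]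
  exact Finset.sum_congr rfl fun i hi => if_pos hi

def sparseSet (k : ℕ) (x : Fin d → ℝ) : Set ℝ :=
  { r : ℝ | ∃ v : Fin d → ℝ, euclNorm v ≤ 1 ∧ IsSparse k v ∧ r = ∑ i, v i * x i }

lemma sparseNorm_eq_sSup (x : Fin d → ℝ) : sparseNorm k x = sSup (sparseSet k x) := rfl

lemma zero_mem_sparseSet (x : Fin d → ℝ) : (0:ℝ) ∈ sparseSet k x :=
  ⟨0, by simp [euclNorm], by simp [IsSparse], by simp⟩

lemma ub_sparseSet (x : Fin d → ℝ) : euclNorm x ∈ upperBounds (sparseSet k x) := by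
  rintro r ⟨v, hv1, -, rfl⟩
  calc ∑ i, v i * x i ≤ Real.sqrt (∑ i, (v i)^2) * Real.sqrt (∑ i, (x i)^2) := cs_sqrt _ _ _
    _ ≤ 1 * euclNorm x := mul_le_mul hv1 le_rfl (Real.sqrt_nonneg _) zero_le_one
    _ = euclNorm x := one_mul _

lemma bddAbove_sparseSet (x : Fin d → ℝ) : BddAbove (sparseSet k x) := ⟨_, ub_sparseSet x⟩

lemma le_sparseNorm {x : Fin d → ℝ} {r : ℝ} (hr : r ∈ sparseSet k x) : r ≤ sparseNorm k x :=
  le_csSup (bddAbove_sparseSet x) hr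

lemma sparseNorm_nonneg (x : Fin d → ℝ) : 0 ≤ sparseNorm k x :=
  le_sparseNorm (zero_mem_sparseSet x)

lemma sqrt_le_sparseNorm {T : Finset (Fin d)} (hT : T.card ≤ k) (x : Fin d → ℝ) :
    Real.sqrt (∑ i ∈ T, (x i)^2) ≤ sparseNorm k x := by
  set c := Real.sqrt (∑ i ∈ T, (x i)^2) with hc
  rcases eq_or_lt_of_le (Real.sqrt_nonneg (∑ i ∈ T, (x i)^2)) with h0 | hpos
  · rw [hc, ← h0]; exact sparseNorm_nonneg x
  · have hc2 : c^2 = ∑ i ∈ T, (x i)^2 := Real.sq_sqrt (by positivity)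
    refine le_sparseNorm ⟨fun i => if i ∈ T then x i / c else 0, ?_, ?_, ?_⟩
    · have : ∑ i, (if i ∈ T then x i / c else 0)^2 = 1 := by
        have : ∀ i, (if i ∈ T then x i / c else 0)^2 = if i ∈ T then (x i)^2 / c^2 else 0 := by
          intro i; by_cases hi : i ∈ T <;> simp [hi, div_pow]
        rw [Finset.sum_congr rfl fun i _ => this i, Fintype.sum_ite_mem,
          ← Finset.sum_div, ← hc2, div_self (by positivity)]
      rw [euclNorm, this, Real.sqrt_one]
    · have hsub : Function.support (fun i => if i ∈ T then x i / c else 0) ⊆ ↑T := by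
        intro i hi
        simp only [Function.mem_support, ne_eq] at hi
        by_contra hiT
        rw [Finset.mem_coe] at hiT
        exact hi (by simp [hiT])
      calc (Function.support _).ncard ≤ (↑T : Set (Fin d)).ncard :=
            Set.ncard_le_ncard hsub (Set.toFinite _)
        _ = T.card := Set.ncard_coe_finset T
        _ ≤ k := hT
    · have : ∀ i, (if i ∈ T then x i / c else 0) * x i = if i ∈ T then (x i)^2 / c else 0 := by
        intro i; by_cases hi : i ∈ T <;> simp [hi] <;> ring
      rw [Finset.sum_congr rfl fun i _ => this i, Fintype.sum_ite_mem,
        ← Finset.sum_div, ← hc2]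
      field_simp

lemma support_card_le {v : Fin d → ℝ} (hv : IsSparse k v) :
    ∃ s : Finset (Fin d), (↑s : Set (Fin d)) = Function.support v ∧ s.card ≤ k := by
  refine ⟨Finset.univ.filter (fun i => v i ≠ 0), ?_, ?_⟩
  · ext i; simp [Function.mem_support]
  · rw [← Set.ncard_coe_finset]
    have : (↑(Finset.univ.filter (fun i => v i ≠ 0)) : Set (Fin d)) = Function.support v := by
      ext i; simp [Function.mem_support]
    rw [this]; exact hv

lemma sparseNorm_attained (hk : k ≤ d) (x : Fin d → ℝ) :
    ∃ T : Finset (Fin d), T.card = k ∧ sparseNorm k x = Real.sqrt (∑ i ∈ T, (x i)^2) := by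
  obtain ⟨T0, -, -, hT0⟩ := Finset.exists_subsuperset_card_eq
    (Finset.empty_subset (Finset.univ : Finset (Fin d))) (by simp) (by simpa using hk)
  obtain ⟨T, hTmem, hTmax⟩ := Finset.exists_max_image
    ((Finset.univ : Finset (Finset (Fin d))).filter (fun S => S.card = k))
    (fun S => ∑ i ∈ S, (x i)^2) ⟨T0, by simp [hT0]⟩
  have hTcard : T.card = k := by simpa using hTmem
  refine ⟨T, hTcard, le_antisymm ?_ (sqrt_le_sparseNorm hTcard.le x)⟩
  refine Real.sSup_le ?_ (Real.sqrt_nonneg _)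
  rintro r ⟨v, hv1, hvs, rfl⟩
  obtain ⟨s, hscoe, hscard⟩ := support_card_le hvs
  obtain ⟨U, hsU, -, hUcard⟩ := Finset.exists_subsuperset_card_eq (s.subset_univ) hscard
    (by simpa using hk)
  have hzero : ∀ i ∈ Finset.univ, i ∉ U → v i * x i = 0 := by
    intro i _ hiU
    have : v i = 0 := by
      by_contra hvi
      exact hiU (hsU (by rw [← Finset.mem_coe, hscoe]; exact hvi))
    simp [this]
  have hrw : ∑ i, v i * x i = ∑ i ∈ U, v i * x i :=
    (Finset.sum_subset (U.subset_univ) hzero).symm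
  rw [hrw]
  calc ∑ i ∈ U, v i * x i
      ≤ Real.sqrt (∑ i ∈ U, (v i)^2) * Real.sqrt (∑ i ∈ U, (x i)^2) := cs_sqrt _ _ _
    _ ≤ 1 * Real.sqrt (∑ i ∈ U, (x i)^2) := by
        refine mul_le_mul ?_ le_rfl (Real.sqrt_nonneg _) zero_le_one
        refine le_trans (Real.sqrt_le_sqrt ?_) hv1
        exact Finset.sum_le_sum_of_subset_of_nonneg (U.subset_univ) fun i _ _ => sq_nonneg _
    _ = Real.sqrt (∑ i ∈ U, (x i)^2) := one_mul _
    _ ≤ Real.sqrt (∑ i ∈ T, (x i)^2) := by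
        refine Real.sqrt_le_sqrt ?_
        exact hTmax U (by simp [hUcard])

lemma abs_le_sparseNorm (hk1 : 1 ≤ k) (x : Fin d → ℝ) (j : Fin d) :
    |x j| ≤ sparseNorm k x := by
  have := sqrt_le_sparseNorm (T := {j}) (by simpa using hk1) x
  simpa [Real.sqrt_sq_eq_abs] using this

lemma fkk_attained (hk : k ≤ d) (A : Matrix (Fin d) (Fin d) ℝ) :
    ∃ S : Finset (Fin d), S.card = k ∧
      fkkNorm k A = Real.sqrt (∑ i ∈ S, (sparseNorm k (A i))^2) ∧
      ∀ S' : Finset (Fin d), S'.card = k →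
        ∑ i ∈ S', (sparseNorm k (A i))^2 ≤ ∑ i ∈ S, (sparseNorm k (A i))^2 := by
  obtain ⟨S0, -, -, hS0⟩ := Finset.exists_subsuperset_card_eq
    (Finset.empty_subset (Finset.univ : Finset (Fin d))) (by simp) (by simpa using hk)
  obtain ⟨S, hSmem, hSmax⟩ := Finset.exists_max_image
    ((Finset.univ : Finset (Finset (Fin d))).filter (fun S => S.card = k))
    (fun S => ∑ i ∈ S, (sparseNorm k (A i))^2) ⟨S0, by simp [hS0]⟩
  have hScard : S.card = k := by simpa using hSmem
  have hSmax' : ∀ S' : Finset (Fin d), S'.card = k →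
      ∑ i ∈ S', (sparseNorm k (A i))^2 ≤ ∑ i ∈ S, (sparseNorm k (A i))^2 :=
    fun S' hS' => hSmax S' (by simp [hS'])
  refine ⟨S, hScard, ?_, hSmax'⟩
  unfold fkkNorm
  congr 1
  apply le_antisymm
  · refine Real.sSup_le ?_ (Finset.sum_nonneg fun i _ => sq_nonneg _)
    rintro r ⟨S', hS', rfl⟩
    exact hSmax' S' hS'
  · refine le_csSup ⟨∑ i ∈ S, (sparseNorm k (A i))^2, ?_⟩ ⟨S, hScard, rfl⟩
    rintro r ⟨S', hS', rfl⟩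
    exact hSmax' S' hS'

lemma euclNorm_pos {v : Fin d → ℝ} (hv : v ≠ 0) : 0 < euclNorm v := by
  obtain ⟨j, hj⟩ := Function.ne_iff.mp hv
  have h1 : (0:ℝ) < ∑ i, (v i)^2 := by
    have h2 : (v j)^2 ≤ ∑ i, (v i)^2 :=
      Finset.single_le_sum (fun i _ => sq_nonneg (v i)) (Finset.mem_univ j)
    have : (0:ℝ) < (v j)^2 := pow_two_pos_of_ne_zero hj
    linarith
  exact Real.sqrt_pos.mpr h1

lemma row_bound {x v : Fin d → ℝ} (hv : (Function.support v).ncard ≤ k) :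
    ∑ j, v j * x j ≤ euclNorm v * sparseNorm k x := by
  by_cases hv0 : v = 0
  · simp [hv0, euclNorm]
  · have hc : 0 < euclNorm v := euclNorm_pos hv0
    set c := euclNorm v with hcdef
    have hmem : (∑ j, (c⁻¹ * v j) * x j) ∈ sparseSet k x := by
      refine ⟨fun j => c⁻¹ * v j, ?_, ?_, rfl⟩
      · have : ∑ i, (c⁻¹ * v i)^2 = c⁻¹^2 * ∑ i, (v i)^2 := by
          rw [Finset.mul_sum]; exact Finset.sum_congr rfl fun i _ => by ring
        rw [euclNorm, this, Real.sqrt_mul (by positivity), Real.sqrt_sq (by positivity)]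
        rw [show Real.sqrt (∑ i, (v i)^2) = c from rfl]
        rw [inv_mul_cancel₀ (ne_of_gt hc)]
      · have hsupp : Function.support (fun j => c⁻¹ * v j) ⊆ Function.support v := by
          intro j hj
          simp only [Function.mem_support] at hj ⊢
          intro h; apply hj; rw [h, mul_zero]
        exact le_trans (Set.ncard_le_ncard hsupp (Set.toFinite _)) hv
    have hle : ∑ j, (c⁻¹ * v j) * x j ≤ sparseNorm k x := le_sparseNorm hmem
    have := mul_le_mul_of_nonneg_left hle hc.le
    calc ∑ j, v j * x j = c * ∑ j, (c⁻¹ * v j) * x j := by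
          rw [Finset.mul_sum]
          refine Finset.sum_congr rfl fun j _ => ?_
          field_simp
      _ ≤ c * sparseNorm k x := this

end FkkAux

open FkkAux

/-- Variational definition of the `(F,k,k)` norm (Fact 2.3): `‖A‖_{F,k,k}` is the
maximum of `⟨A,B⟩` over matrices `B` with `‖B‖_F = 1` having at most `k` nonzero rows,
each with at most `k` nonzero entries; moreover the maximum is attained. -/
theorem fkk_variational {d k : ℕ} (hd : 1 ≤ d) (hk1 : 1 ≤ k) (hk : k ≤ d)
    (A : Matrix (Fin d) (Fin d) ℝ) :
    (∃ B : Matrix (Fin d) (Fin d) ℝ,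
        matFrob B = 1 ∧ RowSparse k B ∧ matInner A B = fkkNorm k A) ∧
    (∀ B : Matrix (Fin d) (Fin d) ℝ,
        matFrob B = 1 → RowSparse k B → matInner A B ≤ fkkNorm k A) := by
  obtain ⟨S, hScard, hSval, hSmax⟩ := fkk_attained hk A
  have hN2 : (fkkNorm k A)^2 = ∑ i ∈ S, (sparseNorm k (A i))^2 := by
    rw [hSval]; exact Real.sq_sqrt (Finset.sum_nonneg fun i _ => sq_nonneg _)
  have hNnn : 0 ≤ fkkNorm k A := by rw [hSval]; exact Real.sqrt_nonneg _
  constructor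
  · -- existence
    choose T hTcard hTval using fun i => sparseNorm_attained hk (A i)
    have hrow2 : ∀ i, (sparseNorm k (A i))^2 = ∑ j ∈ T i, (A i j)^2 := fun i => by
      rw [hTval i]; exact Real.sq_sqrt (by positivity)
    rcases eq_or_lt_of_le hNnn with hN0 | hNpos
    · -- fkkNorm = 0, hence A = 0
      have hA : ∀ i j, A i j = 0 := by
        intro i j
        have hsn : sparseNorm k (A i) = 0 := by
          obtain ⟨S', hsub, -, hcard⟩ := Finset.exists_subsuperset_card_eq
            (Finset.subset_univ {i}) (by simpa using hk1) (by simpa using hk)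
          have h1 : (sparseNorm k (A i))^2 ≤ ∑ i' ∈ S', (sparseNorm k (A i'))^2 :=
            Finset.single_le_sum (f := fun i' => (sparseNorm k (A i'))^2)
              (fun i' _ => sq_nonneg _) (hsub (Finset.mem_singleton_self i))
          have h2 := hSmax S' hcard
          have h3 : ∑ i' ∈ S, (sparseNorm k (A i'))^2 = 0 := by rw [← hN2, ← hN0]; ring
          nlinarith [sparseNorm_nonneg (k := k) (A i)]
        have := abs_le_sparseNorm hk1 (A i) j
        rw [hsn] at this
        exact abs_nonpos_iff.mp this
      set i0 : Fin d := ⟨0, hd⟩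
      refine ⟨fun i j => (if i = i0 then 1 else 0) * (if j = i0 then 1 else 0), ?_, ?_, ?_⟩
      · simp [matFrob, mul_pow, ite_pow, Finset.sum_ite_eq']
      · constructor
        · have hsub : {i | (fun j => (if i = i0 then (1:ℝ) else 0) * (if j = i0 then 1 else 0)) ≠ 0}
              ⊆ ({i0} : Set (Fin d)) := by
            intro i hi
            simp only [Set.mem_setOf_eq] at hi
            by_contra hii
            apply hi
            funext j
            simp only [Set.mem_singleton_iff] at hii
            simp [hii]
          calc _ ≤ ({i0} : Set (Fin d)).ncard := Set.ncard_le_ncard hsub (Set.finite_singleton _)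
            _ = 1 := Set.ncard_singleton _
            _ ≤ k := hk1
        · intro i
          have hsub : Function.support (fun j => (if i = i0 then (1:ℝ) else 0) * (if j = i0 then 1 else 0))
              ⊆ ({i0} : Set (Fin d)) := by
            intro j hj
            simp only [Function.mem_support] at hj
            by_contra hjj
            apply hj
            simp only [Set.mem_singleton_iff] at hjj
            simp [hjj]
          calc _ ≤ ({i0} : Set (Fin d)).ncard := Set.ncard_le_ncard hsub (Set.finite_singleton _)
            _ = 1 := Set.ncard_singleton _
            _ ≤ k := hk1
      · have : matInner A (fun i j => (if i = i0 then (1:ℝ) else 0) * (if j = i0 then 1 else 0)) = 0 := by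
          simp [matInner, hA]
        rw [this, ← hN0]
    · -- fkkNorm > 0
      set N := fkkNorm k A with hNdef
      set B : Matrix (Fin d) (Fin d) ℝ :=
        fun i j => if i ∈ S then (if j ∈ T i then A i j / N else 0) else 0 with hBdef
      have hsum2 : ∑ i, ∑ j, (B i j)^2 = 1 := by
        have h1 : ∀ i j, (B i j)^2 = if i ∈ S then (if j ∈ T i then (A i j)^2 / N^2 else 0) else 0 := by
          intro i j
          by_cases hi : i ∈ S <;> by_cases hj : j ∈ T i <;> simp [hBdef, hi, hj, div_pow]
        have h2 : ∀ i, ∑ j, (B i j)^2 = if i ∈ S then ∑ j ∈ T i, (A i j)^2 / N^2 else 0 := by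
          intro i
          by_cases hi : i ∈ S
          · simp only [h1, hi, if_true]
            exact sum_ite_univ (T i) _
          · simp [h1, hi]
        calc ∑ i, ∑ j, (B i j)^2
            = ∑ i ∈ S, ∑ j ∈ T i, (A i j)^2 / N^2 := by
              rw [Finset.sum_congr rfl fun i _ => h2 i]
              exact sum_ite_univ S _
          _ = (∑ i ∈ S, ∑ j ∈ T i, (A i j)^2) / N^2 := by
              rw [Finset.sum_div]
              exact Finset.sum_congr rfl fun i _ => (Finset.sum_div _ _ _).symm
          _ = N^2 / N^2 := by
              rw [hN2]
              congr 1
              exact Finset.sum_congr rfl fun i _ => (hrow2 i).symm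
          _ = 1 := div_self (by positivity)
      refine ⟨B, ?_, ?_, ?_⟩
      · rw [matFrob, hsum2, Real.sqrt_one]
      · constructor
        · have hsub : {i | B i ≠ 0} ⊆ (↑S : Set (Fin d)) := by
            intro i hi
            simp only [Set.mem_setOf_eq] at hi
            by_contra hiS
            rw [Finset.mem_coe] at hiS
            apply hi
            funext j
            simp [hBdef, hiS]
          calc _ ≤ (↑S : Set (Fin d)).ncard := Set.ncard_le_ncard hsub (Set.toFinite _)
            _ = S.card := Set.ncard_coe_finset S
            _ = k := hScard
        · intro i
          have hsub : Function.support (B i) ⊆ (↑(T i) : Set (Fin d)) := by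
            intro j hj
            simp only [Function.mem_support] at hj
            by_contra hjT
            rw [Finset.mem_coe] at hjT
            apply hj
            by_cases hi : i ∈ S <;> simp [hBdef, hi, hjT]
          calc _ ≤ (↑(T i) : Set (Fin d)).ncard := Set.ncard_le_ncard hsub (Set.toFinite _)
            _ = (T i).card := Set.ncard_coe_finset _
            _ = k := hTcard i
      · have h1 : ∀ i j, A i j * B i j = if i ∈ S then (if j ∈ T i then (A i j)^2 / N else 0) else 0 := by
          intro i j
          by_cases hi : i ∈ S <;> by_cases hj : j ∈ T i <;> simp [hBdef, hi, hj] <;> ring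
        have h2 : ∀ i, ∑ j, A i j * B i j = if i ∈ S then ∑ j ∈ T i, (A i j)^2 / N else 0 := by
          intro i
          by_cases hi : i ∈ S
          · simp only [h1, hi, if_true]
            exact sum_ite_univ (T i) _
          · simp [h1, hi]
        calc matInner A B
            = ∑ i ∈ S, ∑ j ∈ T i, (A i j)^2 / N := by
              rw [matInner, Finset.sum_congr rfl fun i _ => h2 i]
              exact sum_ite_univ S _
          _ = (∑ i ∈ S, ∑ j ∈ T i, (A i j)^2) / N := by
              rw [Finset.sum_div]
              exact Finset.sum_congr rfl fun i _ => (Finset.sum_div _ _ _).symm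
          _ = N^2 / N := by
              rw [hN2]
              congr 1
              exact Finset.sum_congr rfl fun i _ => (hrow2 i).symm
          _ = N := by
              rw [pow_two, mul_div_assoc, div_self (ne_of_gt hNpos), mul_one]
  · -- upper bound
    intro B hB hRS
    obtain ⟨hrows, hsupp⟩ := hRS
    classical
    set Si : Finset (Fin d) := Finset.univ.filter (fun i => B i ≠ 0) with hSi
    have hSicard : Si.card ≤ k := by
      rw [← Set.ncard_coe_finset]
      have : (↑Si : Set (Fin d)) = {i | B i ≠ 0} := by ext i; simp [hSi]
      rw [this]; exact hrows
    obtain ⟨S', hSS', -, hS'card⟩ := Finset.exists_subsuperset_card_eq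
      (Si.subset_univ) hSicard (by simpa using hk)
    have hB2 : ∑ i, ∑ j, (B i j)^2 = 1 := by
      have := hB
      rw [matFrob] at this
      nlinarith [Real.sq_sqrt (show (0:ℝ) ≤ ∑ i, ∑ j, (B i j)^2 by positivity),
        Real.sqrt_nonneg (∑ i, ∑ j, (B i j)^2)]
    have hrw : matInner A B = ∑ i ∈ S', ∑ j, A i j * B i j := by
      rw [matInner]
      refine (Finset.sum_subset (S'.subset_univ) ?_).symm
      intro i _ hiS'
      have hBi : B i = 0 := by
        by_contra hBi
        exact hiS' (hSS' (by simp [hSi, hBi]))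
      simp [hBi]
    have hrowle : ∀ i, ∑ j, A i j * B i j ≤ euclNorm (B i) * sparseNorm k (A i) := by
      intro i
      have := row_bound (x := A i) (v := B i) (hsupp i)
      calc ∑ j, A i j * B i j = ∑ j, B i j * A i j := by
            exact Finset.sum_congr rfl fun j _ => mul_comm _ _
        _ ≤ _ := this
    calc matInner A B = ∑ i ∈ S', ∑ j, A i j * B i j := hrw
      _ ≤ ∑ i ∈ S', euclNorm (B i) * sparseNorm k (A i) :=
          Finset.sum_le_sum fun i _ => hrowle i
      _ ≤ Real.sqrt (∑ i ∈ S', (euclNorm (B i))^2) *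
          Real.sqrt (∑ i ∈ S', (sparseNorm k (A i))^2) := cs_sqrt _ _ _
      _ ≤ 1 * fkkNorm k A := by
          refine mul_le_mul ?_ ?_ (Real.sqrt_nonneg _) zero_le_one
          · rw [show (1:ℝ) = Real.sqrt 1 from (Real.sqrt_one).symm]
            refine Real.sqrt_le_sqrt ?_
            rw [← hB2]
            have heq : ∀ i, (euclNorm (B i))^2 = ∑ j, (B i j)^2 := fun i =>
              Real.sq_sqrt (by positivity)
            rw [Finset.sum_congr rfl fun i _ => heq i]
            exact Finset.sum_le_sum_of_subset_of_nonneg (S'.subset_univ)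
              fun i _ _ => by positivity
          · rw [hSval]
            exact Real.sqrt_le_sqrt (hSmax S' hS'card)
      _ = fkkNorm k A := one_mul _
end
end

section
/- Let d ≥ 1, 1 ≤ k ≤ d, and A ∈ ℝ^{d×d}. For all unit vectors u, v ∈ ℝ^d each having at most k nonzero coordinates, |u^T A v| ≤ ‖A‖_{F,k,k}. In particular, sup over unit vectors v with at most k nonzero coordinates of |v^T A v| is at most ‖A‖_{F,k,k}. -/
open Real

noncomputable section

lemma aux_bdd {d k : ℕ} (x : Fin d → ℝ) :
    BddAbove { r : ℝ | ∃ v : Fin d → ℝ, euclNorm v ≤ 1 ∧ IsSparse k v ∧ r = ∑ i, v i * x i } := by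
  refine ⟨euclNorm x, ?_⟩
  rintro r ⟨v, hv, -, rfl⟩
  have h1 : (∑ i, v i * x i)^2 ≤ (∑ i, (v i)^2) * (∑ i, (x i)^2) :=
    Finset.sum_mul_sq_le_sq_mul_sq Finset.univ v x
  have h2 : |∑ i, v i * x i| ≤ Real.sqrt ((∑ i, (v i)^2) * (∑ i, (x i)^2)) :=
    Real.abs_le_sqrt h1
  calc ∑ i, v i * x i ≤ |∑ i, v i * x i| := le_abs_self _
    _ ≤ Real.sqrt ((∑ i, (v i)^2) * (∑ i, (x i)^2)) := h2
    _ = euclNorm v * euclNorm x := Real.sqrt_mul (by positivity) _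
    _ ≤ 1 * euclNorm x := by
        have : (0:ℝ) ≤ euclNorm x := Real.sqrt_nonneg _
        exact mul_le_mul_of_nonneg_right hv this
    _ = euclNorm x := one_mul _

lemma aux_dot_le {d k : ℕ} (x v : Fin d → ℝ) (hv : euclNorm v ≤ 1) (hs : IsSparse k v) :
    |∑ i, v i * x i| ≤ sparseNorm k x := by
  have hmem : (∑ i, v i * x i) ∈ { r : ℝ | ∃ v : Fin d → ℝ,
      euclNorm v ≤ 1 ∧ IsSparse k v ∧ r = ∑ i, v i * x i } := ⟨v, hv, hs, rfl⟩
  have hneg : (∑ i, (-v) i * x i) ∈ { r : ℝ | ∃ v : Fin d → ℝ,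
      euclNorm v ≤ 1 ∧ IsSparse k v ∧ r = ∑ i, v i * x i } := by
    refine ⟨-v, ?_, ?_, rfl⟩
    · simpa [euclNorm] using hv
    · simpa [IsSparse, Function.support_neg] using hs
  have h1 := le_csSup (aux_bdd x) hmem
  have h2 := le_csSup (aux_bdd x) hneg
  rw [abs_le]
  unfold sparseNorm
  constructor
  · have : ∑ i, (-v) i * x i = -∑ i, v i * x i := by simp [neg_mul, Finset.sum_neg_distrib]
    rw [this] at h2
    linarith [h2]
  · exact h1

lemma sparseNorm_nonneg {d k : ℕ} (x : Fin d → ℝ) : 0 ≤ sparseNorm k x := by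
  have hmem : (0:ℝ) ∈ { r : ℝ | ∃ v : Fin d → ℝ,
      euclNorm v ≤ 1 ∧ IsSparse k v ∧ r = ∑ i, v i * x i } := by
    refine ⟨0, ?_, ?_, by simp⟩
    · simp [euclNorm]
    · simp [IsSparse]
  exact le_csSup (aux_bdd x) hmem

/-- Fact 2.4: for `k`-sparse unit vectors `u, v`, `|uᵀ A v| ≤ ‖A‖_{F,k,k}`; in particular
the sparse operator-type quantity `|vᵀ A v|` is bounded by `‖A‖_{F,k,k}`. -/
theorem sparse_bilinear_le_fkk {d k : ℕ} (hd : 1 ≤ d) (hk1 : 1 ≤ k) (hk : k ≤ d)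
    (A : Matrix (Fin d) (Fin d) ℝ) :
    (∀ u v : Fin d → ℝ, euclNorm u = 1 → euclNorm v = 1 → IsSparse k u → IsSparse k v →
        |∑ i, ∑ j, u i * A i j * v j| ≤ fkkNorm k A) ∧
    (∀ v : Fin d → ℝ, euclNorm v = 1 → IsSparse k v →
        |∑ i, ∑ j, v i * A i j * v j| ≤ fkkNorm k A) := by
  have main : ∀ u v : Fin d → ℝ, euclNorm u = 1 → euclNorm v = 1 → IsSparse k u → IsSparse k v →
      |∑ i, ∑ j, u i * A i j * v j| ≤ fkkNorm k A := by
    intro u v hu hv hsu hsv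
    -- support of u as a finset, extended to size k
    set su : Finset (Fin d) := (Set.toFinite (Function.support u)).toFinset with hsu_def
    have hsu_card : su.card ≤ k := by
      rw [hsu_def, ← Set.ncard_eq_toFinset_card _ (Set.toFinite _)]
      exact hsu
    obtain ⟨S, hsuS, -, hScard⟩ := Finset.exists_subsuperset_card_eq (su.subset_univ)
      hsu_card (by simpa using hk)
    have hu_zero : ∀ i ∉ S, u i = 0 := by
      intro i hi
      by_contra h
      exact hi (hsuS (by simp [hsu_def, Function.mem_support, h]))
    -- rewrite as sum over S
    have hrw : ∑ i, ∑ j, u i * A i j * v j = ∑ i ∈ S, u i * ∑ j, A i j * v j := by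
      rw [← Finset.sum_subset S.subset_univ]
      · exact Finset.sum_congr rfl fun i _ => by
          rw [Finset.mul_sum]; exact Finset.sum_congr rfl fun j _ => mul_assoc _ _ _
      · intro i _ hi; simp [hu_zero i hi]
    have husq : ∑ i, (u i)^2 = 1 := by
      have h0 : (0:ℝ) ≤ ∑ i, (u i)^2 := by positivity
      have := hu
      rw [euclNorm, Real.sqrt_eq_one] at this
      exact this
    -- Cauchy-Schwarz over S
    have hcs : (∑ i ∈ S, u i * ∑ j, A i j * v j)^2 ≤
        (∑ i ∈ S, (u i)^2) * ∑ i ∈ S, (∑ j, A i j * v j)^2 :=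
      Finset.sum_mul_sq_le_sq_mul_sq S u _
    have hu_le : ∑ i ∈ S, (u i)^2 ≤ 1 := by
      rw [← husq]
      exact Finset.sum_le_sum_of_subset_of_nonneg S.subset_univ (fun i _ _ => sq_nonneg _)
    have hterm : ∀ i ∈ S, (∑ j, A i j * v j)^2 ≤ (sparseNorm k (A i))^2 := by
      intro i _
      have h := aux_dot_le (A i) v hv.le hsv
      have h' : |∑ j, v j * A i j| = |∑ j, A i j * v j| := by
        congr 1; exact Finset.sum_congr rfl fun j _ => mul_comm _ _
      rw [h'] at h
      calc (∑ j, A i j * v j)^2 = |∑ j, A i j * v j|^2 := (sq_abs _).symm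
        _ ≤ (sparseNorm k (A i))^2 := pow_le_pow_left₀ (abs_nonneg _) h 2
    have hsum_le : ∑ i ∈ S, (∑ j, A i j * v j)^2 ≤ ∑ i ∈ S, (sparseNorm k (A i))^2 :=
      Finset.sum_le_sum hterm
    have hsum_nonneg : (0:ℝ) ≤ ∑ i ∈ S, (∑ j, A i j * v j)^2 := by positivity
    -- the fkk set is bounded above (finite)
    have hfin : ({ r : ℝ | ∃ T : Finset (Fin d), T.card = k ∧
        r = ∑ i ∈ T, (sparseNorm k (A i))^2 }).Finite := by
      have : { r : ℝ | ∃ T : Finset (Fin d), T.card = k ∧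
          r = ∑ i ∈ T, (sparseNorm k (A i))^2 } ⊆
          (fun T : Finset (Fin d) => ∑ i ∈ T, (sparseNorm k (A i))^2) '' Set.univ := by
        rintro r ⟨T, -, rfl⟩; exact ⟨T, trivial, rfl⟩
      exact Set.Finite.subset ((Set.finite_univ).image _) this
    have hmemS : (∑ i ∈ S, (sparseNorm k (A i))^2) ∈ { r : ℝ | ∃ T : Finset (Fin d),
        T.card = k ∧ r = ∑ i ∈ T, (sparseNorm k (A i))^2 } := ⟨S, hScard, rfl⟩
    have hle_sup : ∑ i ∈ S, (sparseNorm k (A i))^2 ≤ sSup { r : ℝ | ∃ T : Finset (Fin d),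
        T.card = k ∧ r = ∑ i ∈ T, (sparseNorm k (A i))^2 } :=
      le_csSup hfin.bddAbove hmemS
    rw [hrw, fkkNorm]
    refine Real.abs_le_sqrt ?_
    calc (∑ i ∈ S, u i * ∑ j, A i j * v j)^2
        ≤ (∑ i ∈ S, (u i)^2) * ∑ i ∈ S, (∑ j, A i j * v j)^2 := hcs
      _ ≤ 1 * ∑ i ∈ S, (∑ j, A i j * v j)^2 :=
          mul_le_mul_of_nonneg_right hu_le hsum_nonneg
      _ = ∑ i ∈ S, (∑ j, A i j * v j)^2 := one_mul _
      _ ≤ ∑ i ∈ S, (sparseNorm k (A i))^2 := hsum_le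
      _ ≤ _ := hle_sup
  exact ⟨main, fun v hv hs => main v v hv hv hs hs⟩
end
end

section
/- (Certificate Lemma.) Let 0 < α < ε < 1/4, let d ≥ 1, 1 ≤ k ≤ d, λ ≥ 0, and μ ∈ ℝ^d. Let G and B be probability distributions on ℝ^d with finite second moments and set P = (1−ε)G + εB. Suppose there is a constant c₁ ≥ 1 such that for every measurable w' : ℝ^d → [0,1] with E_{X∼G}[w'(X)] ≥ 1−α: (1.a) ‖μ_{G_{w'}} − μ‖_{2,k} ≤ c₁·α·√(log(1/α)); and (1.b) for every unit vector v ∈ ℝ^d with at most k nonzero coordinates, |v^T (Σ̄_{G_{w'}} − I) v| ≤ c₁·α·log(1/α), where Σ̄_{G_{w'}} := E_{X∼G_{w'}}[(X−μ)(X−μ)^T]. Let w : ℝ^d → [0,1] be measurable with E_{X∼G}[w(X)] > 1−α, and suppose that for every unit vector v with at most k nonzero coordinates, v^T Σ_{P_w} v ≤ 1 + λ, where Σ_{P_w} is the covariance matrix of P_w. Then there is a constant C depending only on c₁ such that ‖μ_{P_w} − μ‖_{2,k} ≤ C·( α√(log(1/α)) + √(λε) + ε + √(α ε log(1/α)) ).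 -/
open MeasureTheory Real
open scoped ENNReal

noncomputable section

/-- Mean vector of a measure on `ℝ^d`. -/
def meanVec {d : ℕ} (P : Measure (Fin d → ℝ)) : Fin d → ℝ := fun i => ∫ x, x i ∂P

/-- Covariance matrix of a measure on `ℝ^d`. -/
def covMatrix {d : ℕ} (P : Measure (Fin d → ℝ)) : Matrix (Fin d) (Fin d) ℝ :=
  fun i j => ∫ x, (x i - meanVec P i) * (x j - meanVec P j) ∂P

/-- Second-moment matrix of a measure on `ℝ^d`, centered at a given vector `μ`. -/
def secondMomentAt {d : ℕ} (P : Measure (Fin d → ℝ)) (μ : Fin d → ℝ) :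
    Matrix (Fin d) (Fin d) ℝ :=
  fun i j => ∫ x, (x i - μ i) * (x j - μ j) ∂P

/-- The reweighting `P_w` of a measure `P` by a weight function `w : ℝ^d → [0,1]`:
the measure with density `w(x) / E_{X∼P}[w(X)]` with respect to `P`. -/
def weighted {d : ℕ} (P : Measure (Fin d → ℝ)) (w : (Fin d → ℝ) → ℝ) :
    Measure (Fin d → ℝ) :=
  P.withDensity fun x => ENNReal.ofReal (w x / ∫ y, w y ∂P)

open scoped NNReal

section SparseAux
variable {d k : ℕ}

lemma euclNorm_smul (c : ℝ) (v : Fin d → ℝ) : euclNorm (c • v) = |c| * euclNorm v := by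
  unfold euclNorm
  rw [show ∑ i, ((c • v) i)^2 = c^2 * ∑ i, (v i)^2 by
    simp [Pi.smul_apply, smul_eq_mul, mul_pow, Finset.mul_sum],
    Real.sqrt_mul (sq_nonneg c), Real.sqrt_sq_eq_abs]

lemma isSparse_smul {v : Fin d → ℝ} (c : ℝ) (h : IsSparse k v) : IsSparse k (c • v) := by
  refine le_trans (Set.ncard_le_ncard ?_ (Set.toFinite _)) h
  intro i hi
  simp only [Function.mem_support, Pi.smul_apply, smul_eq_mul] at hi ⊢
  intro h0; exact hi (by rw [h0, mul_zero])

lemma isSparse_neg {v : Fin d → ℝ} (h : IsSparse k v) : IsSparse k (-v) := by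
  have : (-1 : ℝ) • v = -v := by funext i; simp
  rw [← this]; exact isSparse_smul _ h

lemma euclNorm_neg (v : Fin d → ℝ) : euclNorm (-v) = euclNorm v := by
  unfold euclNorm; congr 1; apply Finset.sum_congr rfl; intro i _; simp

lemma cauchy_sum (v x : Fin d → ℝ) : ∑ i, v i * x i ≤ euclNorm v * euclNorm x := by
  have h := Finset.sum_mul_sq_le_sq_mul_sq Finset.univ v x
  calc ∑ i, v i * x i ≤ |∑ i, v i * x i| := le_abs_self _
    _ = Real.sqrt ((∑ i, v i * x i)^2) := (Real.sqrt_sq_eq_abs _).symm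
    _ ≤ Real.sqrt ((∑ i, (v i)^2) * ∑ i, (x i)^2) := Real.sqrt_le_sqrt h
    _ = euclNorm v * euclNorm x := Real.sqrt_mul (by positivity) _

lemma bddAbove_sparseSet (x : Fin d → ℝ) :
    BddAbove { r : ℝ | ∃ v : Fin d → ℝ, euclNorm v ≤ 1 ∧ IsSparse k v ∧ r = ∑ i, v i * x i } := by
  refine ⟨euclNorm x, ?_⟩
  rintro r ⟨v, h1, _, rfl⟩
  calc ∑ i, v i * x i ≤ euclNorm v * euclNorm x := cauchy_sum v x
    _ ≤ 1 * euclNorm x := mul_le_mul_of_nonneg_right h1 (Real.sqrt_nonneg _)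
    _ = euclNorm x := one_mul _

lemma le_sparseNorm {v : Fin d → ℝ} (x : Fin d → ℝ) (h1 : euclNorm v ≤ 1) (h2 : IsSparse k v) :
    ∑ i, v i * x i ≤ sparseNorm k x :=
  le_csSup (bddAbove_sparseSet x) ⟨v, h1, h2, rfl⟩

lemma sparseNorm_le {x : Fin d → ℝ} {b : ℝ} (hb : 0 ≤ b)
    (h : ∀ v : Fin d → ℝ, euclNorm v = 1 → IsSparse k v → ∑ i, v i * x i ≤ b) :
    sparseNorm k x ≤ b := by
  apply Real.sSup_le _ hb
  rintro r ⟨v, hv1, hvs, rfl⟩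
  by_cases hv0 : v = 0
  · simpa [hv0] using hb
  · have hpos : 0 < euclNorm v := by
      obtain ⟨i, hi⟩ := Function.ne_iff.mp hv0
      have hi' : v i ≠ 0 := by simpa using hi
      have : (0:ℝ) < ∑ i, (v i)^2 :=
        Finset.sum_pos' (fun j _ => sq_nonneg _) ⟨i, Finset.mem_univ i, by positivity⟩
      exact Real.sqrt_pos.mpr this
    set s := euclNorm v with hs
    have hu1 : euclNorm (s⁻¹ • v) = 1 := by
      rw [euclNorm_smul, abs_of_nonneg (inv_nonneg.mpr hpos.le)]
      field_simp
      exact hs.symm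
    have hkey := h (s⁻¹ • v) hu1 (isSparse_smul _ hvs)
    have hsum : ∑ i, (s⁻¹ • v) i * x i = s⁻¹ * ∑ i, v i * x i := by
      simp [Pi.smul_apply, smul_eq_mul, Finset.mul_sum, mul_assoc]
    rw [hsum] at hkey
    have h2 : ∑ i, v i * x i ≤ s * b := by
      have := mul_le_mul_of_nonneg_left hkey hpos.le
      rw [← mul_assoc, mul_inv_cancel₀ (ne_of_gt hpos), one_mul] at this
      exact this
    nlinarith

lemma sum_sq_eq_one {v : Fin d → ℝ} (h : euclNorm v = 1) : ∑ i, (v i)^2 = 1 := by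
  have h2 := congrArg (·^2) h
  simp only [euclNorm] at h2
  rwa [Real.sq_sqrt (by positivity), one_pow] at h2

end SparseAux

section MeasAux
variable {d : ℕ}

lemma int_sub {Q : Measure (Fin d → ℝ)} {f g : (Fin d → ℝ) → ℝ}
    (hf : Integrable f Q) (hg : Integrable g Q) : Integrable (fun x => f x - g x) Q :=
  hf.sub hg

lemma int_add {Q : Measure (Fin d → ℝ)} {f g : (Fin d → ℝ) → ℝ}
    (hf : Integrable f Q) (hg : Integrable g Q) : Integrable (fun x => f x + g x) Q :=
  hf.add hg

lemma integral_weighted (P : Measure (Fin d → ℝ)) (w : (Fin d → ℝ) → ℝ)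
    (hw : Measurable w) (hw0 : ∀ x, 0 ≤ w x) (g : (Fin d → ℝ) → ℝ) :
    ∫ x, g x ∂(weighted P w) = ∫ x, (w x / ∫ y, w y ∂P) * g x ∂P := by
  have hW : 0 ≤ ∫ y, w y ∂P := integral_nonneg hw0
  have heq : (fun x => ENNReal.ofReal (w x / ∫ y, w y ∂P)) =
      (fun x => ((Real.toNNReal (w x / ∫ y, w y ∂P) : ℝ≥0) : ℝ≥0∞)) := rfl
  rw [weighted, heq, integral_withDensity_eq_integral_smul
    ((hw.div_const _).real_toNNReal) g]
  congr 1; funext x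
  rw [NNReal.smul_def, Real.coe_toNNReal _ (div_nonneg (hw0 x) hW), smul_eq_mul]

lemma w_norm_bound {Q : Measure (Fin d → ℝ)} {w : (Fin d → ℝ) → ℝ} (hw0 : ∀ x, 0 ≤ w x) (hw1 : ∀ x, w x ≤ 1) :
    ∀ᵐ x ∂Q, ‖w x‖ ≤ 1 :=
  Filter.Eventually.of_forall fun x => by rw [Real.norm_eq_abs, abs_of_nonneg (hw0 x)]; exact hw1 x

lemma integrable_of_le_one {Q : Measure (Fin d → ℝ)} [IsFiniteMeasure Q]
    {w : (Fin d → ℝ) → ℝ} (hw : Measurable w) (hw0 : ∀ x, 0 ≤ w x) (hw1 : ∀ x, w x ≤ 1) :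
    Integrable w Q := by
  have h := (integrable_const (1:ℝ) : Integrable _ Q).bdd_mul hw.aestronglyMeasurable
    (w_norm_bound hw0 hw1)
  simpa using h

lemma integrable_prod {Q : Measure (Fin d → ℝ)}
    (hQi : ∀ i, Integrable (fun x => x i) Q) (hQij : ∀ i j, Integrable (fun x => x i * x j) Q)
    [IsFiniteMeasure Q] (a : Fin d → ℝ) (i j : Fin d) :
    Integrable (fun x => (x i - a i) * (x j - a j)) Q := by
  have h1 : (fun x : Fin d → ℝ => (x i - a i) * (x j - a j)) =
      (fun x => x i * x j - a j * x i - (a i * x j - a i * a j)) := by funext x; ring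
  rw [h1]
  exact ((hQij i j).sub ((hQi i).const_mul (a j))).sub
    (((hQi j).const_mul (a i)).sub (integrable_const _))

lemma integrable_lin {Q : Measure (Fin d → ℝ)}
    (hQi : ∀ i, Integrable (fun x => x i) Q) [IsFiniteMeasure Q] (v μ : Fin d → ℝ) :
    Integrable (fun x => ∑ i, v i * (x i - μ i)) Q := by
  apply integrable_finset_sum
  intro i _
  have h : (fun x : Fin d → ℝ => v i * (x i - μ i)) = fun x => v i * x i - v i * μ i := by
    funext x; ring
  rw [h]
  exact ((hQi i).const_mul _).sub (integrable_const _)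

lemma integrable_sq {Q : Measure (Fin d → ℝ)}
    (hQi : ∀ i, Integrable (fun x => x i) Q) (hQij : ∀ i j, Integrable (fun x => x i * x j) Q)
    [IsFiniteMeasure Q] (v μ : Fin d → ℝ) :
    Integrable (fun x => (∑ i, v i * (x i - μ i))^2) Q := by
  have h1 : ∀ x : Fin d → ℝ, (∑ i, v i * (x i - μ i))^2 =
      ∑ i, ∑ j, (v i * v j) * ((x i - μ i) * (x j - μ j)) := by
    intro x
    rw [sq, Finset.sum_mul_sum]
    exact Finset.sum_congr rfl fun i _ => Finset.sum_congr rfl fun j _ => by ring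
  simp only [h1]
  exact integrable_finset_sum _ fun i _ => integrable_finset_sum _ fun j _ =>
    (integrable_prod hQi hQij μ i j).const_mul _

lemma weighted_sum_mean {Q : Measure (Fin d → ℝ)} {w : (Fin d → ℝ) → ℝ}
    (hw : Measurable w) (hw0 : ∀ x, 0 ≤ w x) (hw1 : ∀ x, w x ≤ 1)
    (hQi : ∀ i, Integrable (fun x => x i) Q) (hwInt : Integrable w Q)
    (hW : 0 < ∫ y, w y ∂Q) (v μ : Fin d → ℝ) :
    ∑ i, v i * (meanVec (weighted Q w) i - μ i) =
      (∫ x, w x * (∑ i, v i * (x i - μ i)) ∂Q) / (∫ y, w y ∂Q) := by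
  set W := ∫ y, w y ∂Q with hWdef
  have hIw : ∀ i, Integrable (fun x => w x * x i) Q := fun i =>
    (hQi i).bdd_mul hw.aestronglyMeasurable (w_norm_bound hw0 hw1)
  have hmean : ∀ i, meanVec (weighted Q w) i = (∫ x, w x * x i ∂Q) / W := by
    intro i
    show (∫ x, x i ∂(weighted Q w)) = _
    rw [integral_weighted Q w hw hw0]
    simp only [div_mul_eq_mul_div]
    rw [integral_div]
  have hnum : ∫ x, w x * (∑ i, v i * (x i - μ i)) ∂Q =
      ∑ i, (v i * ∫ x, w x * x i ∂Q - v i * μ i * W) := by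
    have h1 : ∀ x, w x * (∑ i, v i * (x i - μ i)) =
        ∑ i, (v i * (w x * x i) - (v i * μ i) * w x) := by
      intro x
      rw [Finset.mul_sum]
      exact Finset.sum_congr rfl fun i _ => by ring
    simp only [h1]
    rw [integral_finset_sum _
      (fun i _ => int_sub ((hIw i).const_mul (v i)) (hwInt.const_mul (v i * μ i)))]
    exact Finset.sum_congr rfl fun i _ => by
      rw [integral_sub ((hIw i).const_mul _) (hwInt.const_mul _),
        integral_const_mul, integral_const_mul]
  rw [eq_div_iff (ne_of_gt hW), hnum, Finset.sum_mul]
  exact Finset.sum_congr rfl fun i _ => by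
    rw [hmean i]; field_simp

lemma weighted_sum_quad {Q : Measure (Fin d → ℝ)} {w : (Fin d → ℝ) → ℝ}
    (hw : Measurable w) (hw0 : ∀ x, 0 ≤ w x) (hw1 : ∀ x, w x ≤ 1)
    (hQi : ∀ i, Integrable (fun x => x i) Q) (hQij : ∀ i j, Integrable (fun x => x i * x j) Q)
    [IsFiniteMeasure Q] (v a : Fin d → ℝ) :
    ∑ i, ∑ j, v i * (∫ x, (x i - a i) * (x j - a j) ∂(weighted Q w)) * v j =
      (∫ x, w x * (∑ i, v i * (x i - a i))^2 ∂Q) / (∫ y, w y ∂Q) := by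
  set W := ∫ y, w y ∂Q with hWdef
  have hwprod : ∀ i j, Integrable (fun x => w x * ((x i - a i) * (x j - a j))) Q := fun i j =>
    (integrable_prod hQi hQij a i j).bdd_mul hw.aestronglyMeasurable (w_norm_bound hw0 hw1)
  have hentry : ∀ i j, ∫ x, (x i - a i) * (x j - a j) ∂(weighted Q w) =
      (∫ x, w x * ((x i - a i) * (x j - a j)) ∂Q) / W := by
    intro i j
    rw [integral_weighted Q w hw hw0]
    simp only [div_mul_eq_mul_div]
    rw [integral_div]
  have hrhs : ∫ x, w x * (∑ i, v i * (x i - a i))^2 ∂Q =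
      ∑ i, ∑ j, (v i * v j) * ∫ x, w x * ((x i - a i) * (x j - a j)) ∂Q := by
    have h1 : ∀ x, w x * (∑ i, v i * (x i - a i))^2 =
        ∑ i, ∑ j, (v i * v j) * (w x * ((x i - a i) * (x j - a j))) := by
      intro x
      rw [sq, Finset.sum_mul_sum, Finset.mul_sum]
      refine Finset.sum_congr rfl fun i _ => ?_
      rw [Finset.mul_sum]
      exact Finset.sum_congr rfl fun j _ => by ring
    simp only [h1]
    rw [integral_finset_sum _
      (fun i _ => integrable_finset_sum _ (fun j _ => (hwprod i j).const_mul _))]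
    exact Finset.sum_congr rfl fun i _ => by
      rw [integral_finset_sum _ (fun j _ => (hwprod i j).const_mul _)]
      exact Finset.sum_congr rfl fun j _ => integral_const_mul _ _
  rw [hrhs, Finset.sum_div]
  refine Finset.sum_congr rfl fun i _ => ?_
  rw [Finset.sum_div]
  refine Finset.sum_congr rfl fun j _ => ?_
  rw [hentry i j]; ring

lemma mix_integral {G B : Measure (Fin d → ℝ)} {h : (Fin d → ℝ) → ℝ} {ε : ℝ}
    (hε0 : 0 ≤ ε) (hε1 : ε ≤ 1) (hG : Integrable h G) (hB : Integrable h B) :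
    ∫ x, h x ∂(ENNReal.ofReal (1-ε) • G + ENNReal.ofReal ε • B) =
      (1-ε) * ∫ x, h x ∂G + ε * ∫ x, h x ∂B := by
  rw [integral_add_measure (hG.smul_measure ENNReal.ofReal_ne_top)
    (hB.smul_measure ENNReal.ofReal_ne_top), integral_smul_measure, integral_smul_measure,
    ENNReal.toReal_ofReal (by linarith), ENNReal.toReal_ofReal hε0, smul_eq_mul, smul_eq_mul]

lemma mix_integrable {G B : Measure (Fin d → ℝ)} {h : (Fin d → ℝ) → ℝ} {ε : ℝ}
    (hG : Integrable h G) (hB : Integrable h B) :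
    Integrable h (ENNReal.ofReal (1-ε) • G + ENNReal.ofReal ε • B) :=
  (hG.smul_measure ENNReal.ofReal_ne_top).add_measure (hB.smul_measure ENNReal.ofReal_ne_top)

lemma integral_cs {Q : Measure (Fin d → ℝ)} {w f : (Fin d → ℝ) → ℝ} (hw0 : ∀ x, 0 ≤ w x)
    (hwInt : Integrable w Q) (hfw : Integrable (fun x => w x * f x) Q)
    (hf2w : Integrable (fun x => w x * (f x)^2) Q) :
    (∫ x, w x * f x ∂Q)^2 ≤ (∫ x, w x * (f x)^2 ∂Q) * (∫ y, w y ∂Q) := by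
  set WB := ∫ y, w y ∂Q with hWB
  set FB := ∫ x, w x * f x ∂Q with hFB
  set SB := ∫ x, w x * (f x)^2 ∂Q with hSB
  have hWB0 : 0 ≤ WB := integral_nonneg hw0
  have key : 0 ≤ ∫ x, w x * (FB - f x * WB)^2 ∂Q :=
    integral_nonneg (fun x => mul_nonneg (hw0 x) (sq_nonneg _))
  have hexp : ∫ x, w x * (FB - f x * WB)^2 ∂Q =
      FB^2 * WB - (2*FB*WB) * FB + WB^2 * SB := by
    have h1 : ∀ x, w x * (FB - f x * WB)^2 =
        FB^2 * w x - (2*FB*WB) * (w x * f x) + WB^2 * (w x * (f x)^2) := by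
      intro x; ring
    simp only [h1]
    rw [integral_add
      (int_sub (hwInt.const_mul (FB^2)) (hfw.const_mul (2*FB*WB))) (hf2w.const_mul _),
      integral_sub (hwInt.const_mul _) (hfw.const_mul _),
      integral_const_mul, integral_const_mul, integral_const_mul]
  rw [hexp] at key
  rcases eq_or_lt_of_le hWB0 with hz | hpos
  · have hwz : w =ᵐ[Q] 0 := by
      rw [← integral_eq_zero_iff_of_nonneg hw0 hwInt]; exact hz.symm
    have hFBz : FB = 0 := by
      rw [hFB]
      rw [integral_congr_ae (g := fun _ => (0:ℝ)) ?_, integral_zero]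
      filter_upwards [hwz] with x hx
      simp [hx]
    rw [hFBz, ← hz]
    simp
  · nlinarith [key, hpos]

end MeasAux

set_option maxHeartbeats 2000000 in
/-- Certificate Lemma (Lemma 2.6). -/
theorem certificate_lemma (c₁ : ℝ) (hc₁ : 1 ≤ c₁) :
    ∃ C : ℝ, 0 < C ∧
    ∀ (d k : ℕ), 1 ≤ d → 1 ≤ k → k ≤ d →
    ∀ (α ε lam : ℝ), 0 < α → α < ε → ε < 1/4 → 0 ≤ lam →
    ∀ μ : Fin d → ℝ,
    ∀ G B : Measure (Fin d → ℝ), IsProbabilityMeasure G → IsProbabilityMeasure B →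
    (∀ i j, Integrable (fun x => x i * x j) G) → (∀ i, Integrable (fun x => x i) G) →
    (∀ i j, Integrable (fun x => x i * x j) B) → (∀ i, Integrable (fun x => x i) B) →
    -- goodness conditions (1.a) and (1.b) for the inlier distribution G
    (∀ w' : (Fin d → ℝ) → ℝ, Measurable w' → (∀ x, w' x ∈ Set.Icc (0:ℝ) 1) →
      1 - α ≤ ∫ x, w' x ∂G →
      sparseNorm k (meanVec (weighted G w') - μ) ≤ c₁ * α * Real.sqrt (Real.log (1/α)) ∧
      (∀ v : Fin d → ℝ, euclNorm v = 1 → IsSparse k v →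
        |∑ i, ∑ j, v i * ((secondMomentAt (weighted G w') μ - 1) i j) * v j| ≤
          c₁ * α * Real.log (1/α))) →
    ∀ w : (Fin d → ℝ) → ℝ, Measurable w → (∀ x, w x ∈ Set.Icc (0:ℝ) 1) →
      1 - α < ∫ x, w x ∂G →
      (∀ v : Fin d → ℝ, euclNorm v = 1 → IsSparse k v →
        ∑ i, ∑ j, v i *
            (covMatrix (weighted (ENNReal.ofReal (1-ε) • G + ENNReal.ofReal ε • B) w) i j) *
            v j ≤ 1 + lam) →
      sparseNorm k
          (meanVec (weighted (ENNReal.ofReal (1-ε) • G + ENNReal.ofReal ε • B) w) - μ) ≤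
        C * (α * Real.sqrt (Real.log (1/α)) + Real.sqrt (lam * ε) + ε +
          Real.sqrt (α * ε * Real.log (1/α))) := by
  refine ⟨8 * c₁, by linarith, ?_⟩
  intro d k hd hk hkd α ε lam hα hαε hε4 hlam μ G B hGp hBp hG2 hG1 hB2 hB1 hgood w hwm hw01
    hwG hcov
  haveI := hGp; haveI := hBp
  have hw0 : ∀ x, 0 ≤ w x := fun x => (hw01 x).1
  have hw1 : ∀ x, w x ≤ 1 := fun x => (hw01 x).2
  have hα4 : α < 1/4 := lt_trans hαε hε4
  have hε0 : (0:ℝ) ≤ ε := le_of_lt (lt_trans hα hαε)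
  have hε1 : ε ≤ 1 := by linarith
  have hc₁0 : (0:ℝ) ≤ c₁ := by linarith
  have hlog : 0 < Real.log (1/α) := Real.log_pos (by rw [lt_div_iff₀ hα]; linarith)
  have hwIntG : Integrable w G := integrable_of_le_one hwm hw0 hw1
  have hwIntB : Integrable w B := integrable_of_le_one hwm hw0 hw1
  have hWG1 : (∫ y, w y ∂G) ≤ 1 := by
    calc (∫ y, w y ∂G) ≤ ∫ y, (1:ℝ) ∂G := integral_mono hwIntG (integrable_const 1) hw1
      _ = 1 := by simp
  have hWB1 : (∫ y, w y ∂B) ≤ 1 := by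
    calc (∫ y, w y ∂B) ≤ ∫ y, (1:ℝ) ∂B := integral_mono hwIntB (integrable_const 1) hw1
      _ = 1 := by simp
  have hWB0 : 0 ≤ ∫ y, w y ∂B := integral_nonneg hw0
  have hWGpos : 3/4 < ∫ y, w y ∂G := by linarith
  have hWGpos' : (0:ℝ) < ∫ y, w y ∂G := by linarith
  set P : Measure (Fin d → ℝ) := ENNReal.ofReal (1-ε) • G + ENNReal.ofReal ε • B with hPdef
  haveI hPfin : IsFiniteMeasure P := by
    constructor
    rw [hPdef]
    simp [measure_univ]
  have hwIntP : Integrable w P := mix_integrable hwIntG hwIntB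
  have hP1 : ∀ i, Integrable (fun x => x i) P := fun i => mix_integrable (hG1 i) (hB1 i)
  have hP2 : ∀ i j, Integrable (fun x => x i * x j) P := fun i j =>
    mix_integrable (hG2 i j) (hB2 i j)
  have hWeq : (∫ y, w y ∂P) = (1-ε) * (∫ y, w y ∂G) + ε * (∫ y, w y ∂B) :=
    mix_integral hε0 hε1 hwIntG hwIntB
  have hWpos : 0 < ∫ y, w y ∂P := by rw [hWeq]; nlinarith
  have hW916 : 9/16 ≤ ∫ y, w y ∂P := by rw [hWeq]; nlinarith
  have hW1 : (∫ y, w y ∂P) ≤ 1 := by rw [hWeq]; nlinarith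
  apply sparseNorm_le
  · have h1 : 0 ≤ α * Real.sqrt (Real.log (1/α)) := mul_nonneg hα.le (Real.sqrt_nonneg _)
    have h2 := Real.sqrt_nonneg (lam * ε)
    have h3 := Real.sqrt_nonneg (α * ε * Real.log (1/α))
    nlinarith
  intro v hv1 hvs
  simp only [Pi.sub_apply]
  -- integrability of the linear functional and its square, times w
  have hwfG : Integrable (fun x => w x * (∑ i, v i * (x i - μ i))) G :=
    (integrable_lin hG1 v μ).bdd_mul hwm.aestronglyMeasurable (w_norm_bound hw0 hw1)
  have hwfB : Integrable (fun x => w x * (∑ i, v i * (x i - μ i))) B :=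
    (integrable_lin hB1 v μ).bdd_mul hwm.aestronglyMeasurable (w_norm_bound hw0 hw1)
  have hwfP : Integrable (fun x => w x * (∑ i, v i * (x i - μ i))) P :=
    mix_integrable hwfG hwfB
  have hwf2G : Integrable (fun x => w x * (∑ i, v i * (x i - μ i))^2) G :=
    (integrable_sq hG1 hG2 v μ).bdd_mul hwm.aestronglyMeasurable (w_norm_bound hw0 hw1)
  have hwf2B : Integrable (fun x => w x * (∑ i, v i * (x i - μ i))^2) B :=
    (integrable_sq hB1 hB2 v μ).bdd_mul hwm.aestronglyMeasurable (w_norm_bound hw0 hw1)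
  have hwf2P : Integrable (fun x => w x * (∑ i, v i * (x i - μ i))^2) P :=
    mix_integrable hwf2G hwf2B
  -- rewrite the goal as a ratio of integrals over P
  have hmP : ∑ i, v i * (meanVec (weighted P w) i - μ i) =
      (∫ x, w x * (∑ i, v i * (x i - μ i)) ∂P) / (∫ y, w y ∂P) :=
    weighted_sum_mean hwm hw0 hw1 hP1 hwIntP hWpos v μ
  rw [hmP]
  -- abbreviations
  set lg := Real.log (1/α) with hlgdef
  set sl := Real.sqrt lg with hsldef
  set s1 := Real.sqrt (lam * ε) with hs1def
  set s2 := Real.sqrt (α * ε * lg) with hs2def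
  set WG := ∫ y, w y ∂G with hWGdef
  set WB := ∫ y, w y ∂B with hWBdef
  set WP := ∫ y, w y ∂P with hWPdef
  set FG := ∫ x, w x * (∑ i, v i * (x i - μ i)) ∂G with hFGdef
  set FB := ∫ x, w x * (∑ i, v i * (x i - μ i)) ∂B with hFBdef
  set FP := ∫ x, w x * (∑ i, v i * (x i - μ i)) ∂P with hFPdef
  set SG := ∫ x, w x * (∑ i, v i * (x i - μ i))^2 ∂G with hSGdef
  set SB := ∫ x, w x * (∑ i, v i * (x i - μ i))^2 ∂B with hSBdef
  set SP := ∫ x, w x * (∑ i, v i * (x i - μ i))^2 ∂P with hSPdef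
  have hsl0 : 0 ≤ sl := Real.sqrt_nonneg _
  have hs10 : 0 ≤ s1 := Real.sqrt_nonneg _
  have hs20 : 0 ≤ s2 := Real.sqrt_nonneg _
  have hm0 : 0 ≤ c₁ * α * sl := mul_nonneg (mul_nonneg hc₁0 hα.le) hsl0
  have hM0 : 0 ≤ c₁ * α * lg := mul_nonneg (mul_nonneg hc₁0 hα.le) hlog.le
  -- goodness conditions applied to w
  obtain ⟨h1a, h1b⟩ := hgood w hwm hw01 (le_of_lt hwG)
  have hmeanG : ∑ i, v i * (meanVec (weighted G w) i - μ i) = FG / WG :=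
    weighted_sum_mean hwm hw0 hw1 hG1 hwIntG hWGpos' v μ
  have hmeanGneg : ∑ i, (-v) i * (meanVec (weighted G w) i - μ i) =
      (∫ x, w x * (∑ i, (-v) i * (x i - μ i)) ∂G) / WG :=
    weighted_sum_mean hwm hw0 hw1 hG1 hwIntG hWGpos' (-v) μ
  have hup : FG / WG ≤ c₁ * α * sl := by
    rw [← hmeanG]
    refine le_trans ?_ h1a
    have h := le_sparseNorm (k := k) (meanVec (weighted G w) - μ) (le_of_eq hv1) hvs
    simpa [Pi.sub_apply] using h
  have hlow : -(FG / WG) ≤ c₁ * α * sl := by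
    have h := le_sparseNorm (k := k) (meanVec (weighted G w) - μ)
      (by rw [euclNorm_neg]; exact le_of_eq hv1) (isSparse_neg hvs)
    have h2 : ∑ i, (-v) i * ((meanVec (weighted G w) - μ) i) =
        ∑ i, (-v) i * (meanVec (weighted G w) i - μ i) := by
      simp [Pi.sub_apply]
    rw [h2, hmeanGneg] at h
    have h3 : (∫ x, w x * (∑ i, (-v) i * (x i - μ i)) ∂G) = -FG := by
      rw [hFGdef, ← integral_neg]
      congr 1; funext x
      simp only [Pi.neg_apply, neg_mul]
      rw [Finset.sum_neg_distrib, mul_neg]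
    rw [h3, neg_div] at h
    exact le_trans h h1a
  have hFGb : |FG| ≤ c₁ * α * sl := by
    have h1 : FG ≤ (c₁ * α * sl) * WG := (div_le_iff₀ hWGpos').mp hup
    have h2 : -((c₁ * α * sl) * WG) ≤ FG := by
      have h' : -(c₁ * α * sl) ≤ FG / WG := by linarith
      have := (le_div_iff₀ hWGpos').mp h'
      linarith
    have h3 : (c₁ * α * sl) * WG ≤ c₁ * α * sl := mul_le_of_le_one_right hm0 hWG1
    exact abs_le.mpr ⟨by linarith, by linarith⟩
  -- second-moment goodness
  have hquadG : ∑ i, ∑ j, v i * (secondMomentAt (weighted G w) μ i j) * v j = SG / WG :=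
    weighted_sum_quad hwm hw0 hw1 hG1 hG2 v μ
  have hSM := h1b v hv1 hvs
  have hunit : ∑ i, (v i)^2 = 1 := sum_sq_eq_one hv1
  have hone : ∑ i, ∑ j, v i * ((1 : Matrix (Fin d) (Fin d) ℝ) i j) * v j = 1 := by
    rw [← hunit]
    refine Finset.sum_congr rfl fun i _ => ?_
    rw [Finset.sum_eq_single i]
    · simp [Matrix.one_apply]; ring
    · intro j _ hj
      simp [Matrix.one_apply, Ne.symm hj]
    · intro h; exact absurd (Finset.mem_univ i) h
  have hsplit : ∑ i, ∑ j, v i * ((secondMomentAt (weighted G w) μ - 1) i j) * v j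
      = (∑ i, ∑ j, v i * (secondMomentAt (weighted G w) μ i j) * v j) - 1 := by
    have hsplit' : ∑ i, ∑ j, v i * ((secondMomentAt (weighted G w) μ - 1) i j) * v j
        = (∑ i, ∑ j, v i * (secondMomentAt (weighted G w) μ i j) * v j) -
          (∑ i, ∑ j, v i * ((1 : Matrix (Fin d) (Fin d) ℝ) i j) * v j) := by
      rw [← Finset.sum_sub_distrib]
      refine Finset.sum_congr rfl fun i _ => ?_
      rw [← Finset.sum_sub_distrib]
      refine Finset.sum_congr rfl fun j _ => ?_
      simp only [Matrix.sub_apply]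
      ring
    rw [hsplit', hone]
  rw [hsplit, hquadG] at hSM
  have hSGlb : (1 - c₁*α*lg) * WG ≤ SG := by
    have h := (abs_le.mp hSM).1
    have h2 : 1 - c₁*α*lg ≤ SG / WG := by linarith
    exact (le_div_iff₀ hWGpos').mp h2
  -- covariance hypothesis
  have hquadP : ∑ i, ∑ j, v i * (covMatrix (weighted P w) i j) * v j =
      (∫ x, w x * (∑ i, v i * (x i - meanVec (weighted P w) i))^2 ∂P) / WP :=
    weighted_sum_quad hwm hw0 hw1 hP1 hP2 v (meanVec (weighted P w))
  have hcv := hcov v hv1 hvs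
  rw [hquadP] at hcv
  have hinner : ∀ x : Fin d → ℝ, ∑ i, v i * (x i - meanVec (weighted P w) i)
      = (∑ i, v i * (x i - μ i)) - FP/WP := by
    intro x
    rw [← hmP, ← Finset.sum_sub_distrib]
    exact Finset.sum_congr rfl fun i _ => by ring
  have hexpand : ∫ x, w x * (∑ i, v i * (x i - meanVec (weighted P w) i))^2 ∂P
      = SP - 2*(FP/WP)*FP + (FP/WP)^2 * WP := by
    have h1 : ∀ x : Fin d → ℝ, w x * (∑ i, v i * (x i - meanVec (weighted P w) i))^2
        = (w x * (∑ i, v i * (x i - μ i))^2 -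
            (2*(FP/WP)) * (w x * (∑ i, v i * (x i - μ i)))) + (FP/WP)^2 * w x := by
      intro x; rw [hinner x]; ring
    simp only [h1]
    rw [integral_add (int_sub hwf2P (hwfP.const_mul _)) (hwIntP.const_mul _),
      integral_sub hwf2P (hwfP.const_mul _), integral_const_mul, integral_const_mul]
  rw [hexpand] at hcv
  -- mixture decompositions
  have hTPeq : FP = (1-ε) * FG + ε * FB := mix_integral hε0 hε1 hwfG hwfB
  have hSPeq : SP = (1-ε) * SG + ε * SB := mix_integral hε0 hε1 hwf2G hwf2B
  -- Cauchy–Schwarz on B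
  have hCS : FB^2 ≤ SB * WB := integral_cs hw0 hwIntB hwfB hwf2B
  have hSB0 : 0 ≤ SB := integral_nonneg (fun x => mul_nonneg (hw0 x) (sq_nonneg _))
  -- transform the covariance bound
  have hcv2 : (1-ε)*SG + ε*SB ≤ (1+lam)*WP + ((1-ε)*FG + ε*FB)^2/WP := by
    rw [hSPeq, hTPeq] at hcv
    rw [div_le_iff₀ hWpos] at hcv
    have hww : WP ≠ 0 := ne_of_gt hWpos
    have he : 2*(((1-ε)*FG + ε*FB)/WP)*((1-ε)*FG + ε*FB) -
        (((1-ε)*FG + ε*FB)/WP)^2*WP = ((1-ε)*FG + ε*FB)^2/WP := by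
      field_simp
      ring
    linarith only [hcv, he]
  have hs1sq : s1^2 = lam*ε := Real.sq_sqrt (mul_nonneg hlam hε0)
  have hs2sq : s2^2 = α*ε*lg := Real.sq_sqrt (mul_nonneg (mul_nonneg hα.le hε0) hlog.le)
  clear_value lg sl s1 s2 WG WB WP FG FB FP SG SB SP
  -- key bound on ε·FB²
  have hFG2 : FG^2 ≤ (c₁*α*sl)^2 := by
    have h := abs_le.mp hFGb
    exact sq_le_sq' (by linarith [h.1]) h.2
  have hT2 : ((1-ε)*FG + ε*FB)^2 ≤ 2*(c₁*α*sl)^2 + 2*(ε*FB)^2 := by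
    linarith only [sq_nonneg ((1-ε)*FG - ε*FB), hFG2,
      mul_nonneg (show (0:ℝ) ≤ 1-(1-ε)^2 by
        linarith only [mul_nonneg hε0 (show (0:ℝ) ≤ 2-ε by linarith only [hε1])])
        (sq_nonneg FG)]
  have hTW : ((1-ε)*FG + ε*FB)^2 / WP ≤ (16/9) * ((1-ε)*FG + ε*FB)^2 := by
    calc ((1-ε)*FG + ε*FB)^2 / WP ≤ ((1-ε)*FG + ε*FB)^2 / (9/16) :=
          div_le_div_of_nonneg_left (sq_nonneg _) (by norm_num) hW916
      _ = (16/9) * ((1-ε)*FG + ε*FB)^2 := by ring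
  have hkey : ε * FB^2 ≤ 9*lam + 9*ε + 9*(c₁*α*lg) + 32*(c₁*α*sl)^2 := by
    have e0 : FB^2 ≤ SB := by
      linarith only [hCS, mul_nonneg hSB0 (show (0:ℝ) ≤ 1 - WB by linarith only [hWB1])]
    have e1 : lam * WP ≤ lam := by
      linarith only [mul_nonneg hlam (show (0:ℝ) ≤ 1 - WP by linarith only [hW1])]
    have e2 : ε * WB ≤ ε := by
      linarith only [mul_nonneg hε0 (show (0:ℝ) ≤ 1 - WB by linarith only [hWB1])]
    have e3 : (1-ε)*(c₁*α*lg)*WG ≤ c₁*α*lg := by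
      linarith only [mul_nonneg hM0 (show (0:ℝ) ≤ 1 - (1-ε)*WG by
        linarith only [hWG1, mul_nonneg hε0 (le_of_lt hWGpos')])]
    have e4 : (16/9)*(2*(ε*FB)^2) ≤ (8/9)*(ε*FB^2) := by
      linarith only [mul_nonneg (mul_nonneg hε0 (sq_nonneg FB))
        (show (0:ℝ) ≤ 1/4 - ε by linarith only [hε4])]
    have e5 : (1-ε)*((1 - c₁*α*lg)*WG) ≤ (1-ε)*SG :=
      mul_le_mul_of_nonneg_left hSGlb (by linarith only [hε1])
    have e6 : ε*FB^2 ≤ ε*SB := mul_le_mul_of_nonneg_left e0 hε0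
    have e7 : ((1-ε)*FG + ε*FB)^2/WP ≤ (16/9)*(2*(c₁*α*sl)^2 + 2*(ε*FB)^2) :=
      le_trans hTW (by linarith only [hT2])
    linarith only [hcv2, e1, e2, e3, e4, e5, e6, e7, hWeq]
  -- square-root manipulations
  have hY : ε*(ε*FB^2) ≤ (3*s1 + 3*ε + 3*c₁*s2 + 3*(c₁*α*sl))^2 := by
    have e8 : ε*(9*(c₁*α*lg)) ≤ 9*c₁^2*(α*ε*lg) := by
      linarith only [mul_nonneg (mul_nonneg (mul_nonneg hc₁0 (show (0:ℝ) ≤ c₁ - 1 by linarith))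
        (mul_nonneg hα.le hε0)) hlog.le]
    have e9 : ε*(32*(c₁*α*sl)^2) ≤ 8*(c₁*α*sl)^2 := by
      linarith only [mul_nonneg (sq_nonneg (c₁*α*sl)) (show (0:ℝ) ≤ 1/4 - ε by linarith)]
    have e10 := mul_le_mul_of_nonneg_left hkey hε0
    nlinarith only [e8, e9, e10, hs1sq, hs2sq, sq_nonneg (c₁*α*sl),
      mul_nonneg hs10 hε0, mul_nonneg hs10 (mul_nonneg hc₁0 hs20), mul_nonneg hs10 hm0,
      mul_nonneg hε0 (mul_nonneg hc₁0 hs20), mul_nonneg hε0 hm0,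
      mul_nonneg (mul_nonneg hc₁0 hs20) hm0]
  have hY0 : 0 ≤ 3*s1 + 3*ε + 3*c₁*s2 + 3*(c₁*α*sl) := by
    linarith only [mul_nonneg hc₁0 hs20, hs10, hε0, hm0]
  have hεFB : ε*|FB| ≤ 3*s1 + 3*ε + 3*c₁*s2 + 3*(c₁*α*sl) := by
    have habs : (ε*|FB|)^2 ≤ (3*s1 + 3*ε + 3*c₁*s2 + 3*(c₁*α*sl))^2 := by
      have h : (ε*|FB|)^2 = ε*(ε*FB^2) := by rw [mul_pow, sq_abs]; ring
      rw [h]; exact hY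
    calc ε*|FB| = Real.sqrt ((ε*|FB|)^2) :=
          (Real.sqrt_sq (mul_nonneg hε0 (abs_nonneg _))).symm
      _ ≤ Real.sqrt ((3*s1 + 3*ε + 3*c₁*s2 + 3*(c₁*α*sl))^2) := Real.sqrt_le_sqrt habs
      _ = 3*s1 + 3*ε + 3*c₁*s2 + 3*(c₁*α*sl) := Real.sqrt_sq hY0
  -- final assembly
  rw [hTPeq]
  have hTb : |(1-ε)*FG + ε*FB| ≤ (1-ε)*|FG| + ε*|FB| := by
    calc |(1-ε)*FG + ε*FB| ≤ |(1-ε)*FG| + |ε*FB| := abs_add_le _ _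
      _ = (1-ε)*|FG| + ε*|FB| := by
        rw [abs_mul, abs_mul, abs_of_nonneg (show (0:ℝ) ≤ 1-ε by linarith),
          abs_of_nonneg hε0]
  have hd1 : ((1-ε)*FG + ε*FB)/WP ≤ |(1-ε)*FG + ε*FB|/WP :=
    (div_le_div_iff_of_pos_right hWpos).mpr (le_abs_self _)
  have hd2 : |(1-ε)*FG + ε*FB|/WP ≤ (16/9)*|(1-ε)*FG + ε*FB| := by
    calc |(1-ε)*FG + ε*FB|/WP ≤ |(1-ε)*FG + ε*FB|/(9/16) :=
          div_le_div_of_nonneg_left (abs_nonneg _) (by norm_num) hW916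
      _ = (16/9)*|(1-ε)*FG + ε*FB| := by ring
  have hd3 : (1-ε)*|FG| ≤ c₁*α*sl := by
    linarith only [hFGb, mul_nonneg hε0 (abs_nonneg FG), abs_le.mp hFGb]
  have e11 : (16/9)*|(1-ε)*FG + ε*FB| ≤
      (16/9)*(c₁*α*sl + (3*s1 + 3*ε + 3*c₁*s2 + 3*(c₁*α*sl))) := by
    have h := le_trans hTb (show (1-ε)*|FG| + ε*|FB| ≤
      c₁*α*sl + (3*s1 + 3*ε + 3*c₁*s2 + 3*(c₁*α*sl)) by linarith only [hd3, hεFB])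
    linarith only [h]
  have e12 : (16/9)*(c₁*α*sl + (3*s1 + 3*ε + 3*c₁*s2 + 3*(c₁*α*sl))) ≤
      8*c₁*(α*sl + s1 + ε + s2) := by
    linarith only [hs10, hε0, hs20, hm0,
      mul_nonneg (show (0:ℝ) ≤ c₁ - 1 by linarith) hs10,
      mul_nonneg (show (0:ℝ) ≤ c₁ - 1 by linarith) hε0,
      mul_nonneg hc₁0 hs20]
  linarith only [hd1, hd2, e11, e12]
end
end

section
/- (Down-weighting filter guarantee.) Let T be a finite set, ε ∈ (0,1), and let G and B be probability distributions on T; set P = (1−ε)G + εB. Let τ : T → ℝ_{≥0}, let M > 0 satisfy τ(x) ≤ M for all x ∈ T, let s > 0 and β > 1, and let w₀ : T → [0,1]. Define recursively w_{i+1}(x) := w_i(x)·(1 − τ(x)/M) if E_{X∼P}[w_i(X)τ(X)] > s·β, and w_{i+1} := w_i otherwise. If (1−ε)·E_{X∼G}[w₀(X)τ(X)] < s, then for every m ∈ ℕ: (1−ε)·E_{X∼G}[w₀(X) − w_m(X)] ≤ (1/(β−1))·ε·E_{X∼B}[w₀(X) − w_m(X)]. -/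
open Real

noncomputable section

/-- Down-weighting filter guarantee (Lemma 2.8), on a finite set `T` (here a finite
type `ι`), with probability mass functions `G` (inliers) and `B` (outliers),
mixture `P = (1-ε) G + ε B`, scores `τ`, threshold `s`, and parameter `β`. -/
theorem downweighting_filter {ι : Type*} [Fintype ι]
    (ε : ℝ) (hε : ε ∈ Set.Ioo (0:ℝ) 1)
    (G B : ι → ℝ)
    (hG0 : ∀ x, 0 ≤ G x) (hG1 : ∑ x, G x = 1)
    (hB0 : ∀ x, 0 ≤ B x) (hB1 : ∑ x, B x = 1)
    (P : ι → ℝ) (hP : ∀ x, P x = (1 - ε) * G x + ε * B x)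
    (τ : ι → ℝ) (hτ : ∀ x, 0 ≤ τ x)
    (M : ℝ) (hM : 0 < M) (hτM : ∀ x, τ x ≤ M)
    (s : ℝ) (hs : 0 < s) (β : ℝ) (hβ : 1 < β)
    (w : ℕ → ι → ℝ) (hw₀ : ∀ x, w 0 x ∈ Set.Icc (0:ℝ) 1)
    -- recursion: down-weight when the weighted average score exceeds s·β, else keep
    (hrec_gt : ∀ i, s * β < ∑ x, P x * (w i x * τ x) →
      w (i+1) = fun x => w i x * (1 - τ x / M))
    (hrec_le : ∀ i, ¬ (s * β < ∑ x, P x * (w i x * τ x)) → w (i+1) = w i)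
    -- the inliers' weighted scores are small at the start
    (hstart : (1 - ε) * ∑ x, G x * (w 0 x * τ x) < s) :
    ∀ m : ℕ,
      (1 - ε) * ∑ x, G x * (w 0 x - w m x) ≤
        (1 / (β - 1)) * ε * ∑ x, B x * (w 0 x - w m x) := by
  have hβ0 : (0:ℝ) < β - 1 := by linarith
  -- weights stay nonnegative and below the initial weights
  have hmono : ∀ i, ∀ x, 0 ≤ w i x ∧ w i x ≤ w 0 x := by
    intro i
    induction i with
    | zero => intro x; exact ⟨(hw₀ x).1, le_refl _⟩
    | succ n ih =>
      intro x
      by_cases h : s * β < ∑ x, P x * (w n x * τ x)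
      · rw [hrec_gt n h]
        have h1 : 0 ≤ 1 - τ x / M := by
          have := (div_le_one hM).2 (hτM x); linarith
        have h2 : 1 - τ x / M ≤ 1 := by
          have : 0 ≤ τ x / M := div_nonneg (hτ x) hM.le
          linarith
        constructor
        · exact mul_nonneg (ih x).1 h1
        · calc w n x * (1 - τ x / M) ≤ w n x * 1 :=
                mul_le_mul_of_nonneg_left h2 (ih x).1
            _ = w n x := mul_one _
            _ ≤ w 0 x := (ih x).2
      · rw [hrec_le n h]; exact ih x
  -- one-step inequality
  have hstep : ∀ i, (1 - ε) * ∑ x, G x * (w i x - w (i+1) x) ≤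
      (1 / (β - 1)) * ε * ∑ x, B x * (w i x - w (i+1) x) := by
    intro i
    by_cases h : s * β < ∑ x, P x * (w i x * τ x)
    · have hw := hrec_gt i h
      have hdiff : ∀ x, w i x - w (i+1) x = (w i x * τ x) / M := by
        intro x; rw [hw]; field_simp; ring
      have hGsum : ∑ x, G x * (w i x - w (i+1) x)
          = (∑ x, G x * (w i x * τ x)) / M := by
        rw [Finset.sum_div]
        exact Finset.sum_congr rfl fun x _ => by rw [hdiff x]; ring
      have hBsum : ∑ x, B x * (w i x - w (i+1) x)
          = (∑ x, B x * (w i x * τ x)) / M := by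
        rw [Finset.sum_div]
        exact Finset.sum_congr rfl fun x _ => by rw [hdiff x]; ring
      set A := ∑ x, G x * (w i x * τ x) with hA
      set Bs := ∑ x, B x * (w i x * τ x) with hBs
      have hPsum : ∑ x, P x * (w i x * τ x) = (1 - ε) * A + ε * Bs := by
        rw [hA, hBs, Finset.mul_sum, Finset.mul_sum, ← Finset.sum_add_distrib]
        exact Finset.sum_congr rfl fun x _ => by rw [hP x]; ring
      -- A ≤ ∑ G x * (w 0 x * τ x)
      have hAle : A ≤ ∑ x, G x * (w 0 x * τ x) := by
        apply Finset.sum_le_sum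
        intro x _
        have := (hmono i x).2
        have hn : 0 ≤ w i x := (hmono i x).1
        have : w i x * τ x ≤ w 0 x * τ x :=
          mul_le_mul_of_nonneg_right (hmono i x).2 (hτ x)
        exact mul_le_mul_of_nonneg_left this (hG0 x)
      have hAs : (1 - ε) * A < s := by
        calc (1 - ε) * A ≤ (1 - ε) * ∑ x, G x * (w 0 x * τ x) :=
              mul_le_mul_of_nonneg_left hAle (by linarith [hε.2])
          _ < s := hstart
      rw [hPsum] at h
      -- ε * Bs > (β - 1) * ((1-ε) * A)
      have hkey : (β - 1) * ((1 - ε) * A) ≤ ε * Bs := by nlinarith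
      rw [hGsum, hBsum]
      have hden : (0:ℝ) < (β - 1) * M := mul_pos hβ0 hM
      calc (1 - ε) * (A / M) = ((β - 1) * ((1 - ε) * A)) / ((β - 1) * M) := by
            field_simp
          _ ≤ (ε * Bs) / ((β - 1) * M) := by gcongr
          _ = 1 / (β - 1) * ε * (Bs / M) := by field_simp
    · rw [hrec_le i h]; simp
  intro m
  induction m with
  | zero => simp
  | succ n ih =>
    have hG' : ∑ x, G x * (w 0 x - w (n+1) x)
        = (∑ x, G x * (w 0 x - w n x)) + ∑ x, G x * (w n x - w (n+1) x) := by
      rw [← Finset.sum_add_distrib]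
      exact Finset.sum_congr rfl fun x _ => by ring
    have hB' : ∑ x, B x * (w 0 x - w (n+1) x)
        = (∑ x, B x * (w 0 x - w n x)) + ∑ x, B x * (w n x - w (n+1) x) := by
      rw [← Finset.sum_add_distrib]
      exact Finset.sum_congr rfl fun x _ => by ring
    have := hstep n
    rw [hG', hB', mul_add, mul_add]
    linarith
end
end

section
/- (PCA error propagation.) There exist constants ε₀ ∈ (0,1/2), c ∈ (0,1) and C > 0 such that the following holds. Let d ≥ 2, ε ∈ (0, ε₀), ρ ∈ (0, 1] with ε·√(log(1/ε)) ≤ c·ρ, let v, w ∈ ℝ^d be unit vectors with w^T v ≥ 0 and ‖w w^T − v v^T‖_F ≤ c·ε·√(log(1/ε))/ρ, let α ∈ [0.1, 2], let y > 0 satisfy |y − (w^T v)²| ≤ c·ε/ρ, and let z ∈ ℝ^d satisfy ‖ z − (ρ·α·(w^T v)/(1 + ρ·(w^T v)²))·(v − (w^T v)·w) ‖₂ ≤ c·ε. Then the vector v̂ := z·(1 + ρ·y)/(ρ·√y·α) + √y·w satisfies ‖v̂ − v‖₂ ≤ C·ε/ρ. -/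
open Real

noncomputable section

lemma euclNorm_eq_norm {d : ℕ} (x : EuclideanSpace ℝ (Fin d)) : euclNorm x = ‖x‖ := by
  rw [EuclideanSpace.norm_eq]
  simp [euclNorm, sq_abs]

set_option maxHeartbeats 2000000 in
/-- PCA error propagation (analysis of the output of Algorithm 3, Claim 4.2):
given a warm start `w`, a robust estimate `y` of `(wᵀv)²` and a robust estimate `z` of
the scaled orthogonal correction, the combined estimator
`v̂ = z (1+ρy)/(ρ√y α) + √y w` satisfies `‖v̂ - v‖₂ ≤ C ε/ρ`. -/
theorem pca_error_propagation :
    ∃ ε₀ c C : ℝ, ε₀ ∈ Set.Ioo (0:ℝ) (1/2) ∧ c ∈ Set.Ioo (0:ℝ) 1 ∧ 0 < C ∧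
      ∀ (d : ℕ), 2 ≤ d →
      ∀ ε ρ : ℝ, ε ∈ Set.Ioo (0:ℝ) ε₀ → 0 < ρ → ρ ≤ 1 →
        ε * Real.sqrt (Real.log (1/ε)) ≤ c * ρ →
      ∀ v w : Fin d → ℝ, euclNorm v = 1 → euclNorm w = 1 →
        0 ≤ ∑ i, w i * v i →
        matFrob (Matrix.vecMulVec w w - Matrix.vecMulVec v v) ≤
          c * ε * Real.sqrt (Real.log (1/ε)) / ρ →
      ∀ α : ℝ, α ∈ Set.Icc (0.1:ℝ) 2 →
      ∀ y : ℝ, 0 < y → |y - (∑ i, w i * v i)^2| ≤ c * ε / ρ →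
      ∀ z : Fin d → ℝ,
        euclNorm (z - (ρ * α * (∑ i, w i * v i) / (1 + ρ * (∑ i, w i * v i)^2)) •
            (v - (∑ i, w i * v i) • w)) ≤ c * ε →
        euclNorm (((1 + ρ * y) / (ρ * Real.sqrt y * α)) • z + Real.sqrt y • w - v) ≤
          C * ε / ρ := by
  refine ⟨Real.exp (-100), 1/100, 1, ⟨Real.exp_pos _, ?_⟩, by norm_num, by norm_num, ?_⟩
  · -- exp (-100) < 1/2
    have h2e : (2:ℝ) ≤ Real.exp 1 := by
      have := Real.add_one_le_exp (1:ℝ); linarith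
    have h1 : Real.exp (-100) < Real.exp (-1) := Real.exp_lt_exp.mpr (by norm_num)
    have h2 : Real.exp (-1) ≤ 1/2 := by
      rw [Real.exp_neg]
      rw [inv_le_comm₀ (Real.exp_pos 1) (by norm_num)]
      linarith
    linarith
  intro d hd ε ρ hε hρ hρ1 hel v w hv hw ht0 hFrob α hα y hy hyt z hz
  obtain ⟨hε0, hεe⟩ := hε
  obtain ⟨hα1, hα2⟩ := hα
  have hα0 : (0:ℝ) < α := by linarith
  set t := ∑ i, w i * v i with htdef
  -- log lower bound
  have hL : (100:ℝ) ≤ Real.log (1/ε) := by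
    have h1ε : Real.exp 100 < 1/ε := by
      rw [lt_div_iff₀ hε0]
      have : Real.exp (-100) * Real.exp 100 = 1 := by
        rw [← Real.exp_add]; norm_num
      nlinarith [Real.exp_pos (100:ℝ)]
    calc (100:ℝ) = Real.log (Real.exp 100) := (Real.log_exp _).symm
      _ ≤ Real.log (1/ε) := le_of_lt (Real.log_lt_log (Real.exp_pos _) h1ε)
  have hsL : (10:ℝ) ≤ Real.sqrt (Real.log (1/ε)) := by
    have := Real.sqrt_le_sqrt hL
    rwa [show Real.sqrt 100 = 10 by
      rw [show (100:ℝ) = 10^2 by norm_num, Real.sqrt_sq (by norm_num)]] at this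
  -- ε is small compared to ρ
  have hεsmall : ε * 10 ≤ (1/100) * ρ := by
    calc ε * 10 ≤ ε * Real.sqrt (Real.log (1/ε)) := by nlinarith
      _ ≤ (1/100) * ρ := hel
  -- sums of squares are 1
  have hvsum : ∑ i, (v i)^2 = 1 := by
    have h0 : (0:ℝ) ≤ ∑ i, (v i)^2 := by positivity
    have := hv
    rw [euclNorm, Real.sqrt_eq_one] at this
    exact this
  have hwsum : ∑ i, (w i)^2 = 1 := by
    have := hw
    rw [euclNorm, Real.sqrt_eq_one] at this
    exact this
  -- Frobenius norm computation : 2 - 2 t² ≤ B², and t ≤ 1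
  have hS : ∑ i, ∑ j, ((Matrix.vecMulVec w w - Matrix.vecMulVec v v) i j)^2
      = 2 - 2 * t^2 := by
    have hentry : ∀ i j, ((Matrix.vecMulVec w w - Matrix.vecMulVec v v) i j)^2
        = (w i)^2 * (w j)^2 - 2 * ((w i * v i) * (w j * v j)) + (v i)^2 * (v j)^2 := by
      intro i j
      simp [Matrix.vecMulVec_apply, Matrix.sub_apply]
      ring
    simp_rw [hentry]
    have e1 : ∑ i, ∑ j, (w i)^2 * (w j)^2 = (∑ i, (w i)^2) * (∑ j, (w j)^2) :=
      (Finset.sum_mul_sum _ _ _ _).symm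
    have e2 : ∑ i, ∑ j, ((w i * v i) * (w j * v j)) = t * t :=
      (Finset.sum_mul_sum _ _ _ _).symm
    have e3 : ∑ i, ∑ j, (v i)^2 * (v j)^2 = (∑ i, (v i)^2) * (∑ j, (v j)^2) :=
      (Finset.sum_mul_sum _ _ _ _).symm
    calc ∑ i, ∑ j, ((w i)^2 * (w j)^2 - 2 * ((w i * v i) * (w j * v j)) + (v i)^2 * (v j)^2)
        = (∑ i, ∑ j, (w i)^2 * (w j)^2) - 2 * (∑ i, ∑ j, ((w i * v i) * (w j * v j)))
          + (∑ i, ∑ j, (v i)^2 * (v j)^2) := by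
          rw [Finset.mul_sum]
          rw [← Finset.sum_sub_distrib, ← Finset.sum_add_distrib]
          refine Finset.sum_congr rfl fun i _ => ?_
          rw [Finset.mul_sum, ← Finset.sum_sub_distrib, ← Finset.sum_add_distrib]
      _ = 2 - 2 * t^2 := by rw [e1, e2, e3, hvsum, hwsum]; ring
  have hSnn : (0:ℝ) ≤ 2 - 2 * t^2 := by
    rw [← hS]; positivity
  have ht1 : t ≤ 1 := by nlinarith
  have hB : matFrob (Matrix.vecMulVec w w - Matrix.vecMulVec v v)
      = Real.sqrt (2 - 2 * t^2) := by rw [matFrob, hS]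
  have hBbound : 2 - 2 * t^2 ≤ ((1/100:ℝ)^2)^2 := by
    have h1 : Real.sqrt (2 - 2*t^2) ≤ (1/100) * ε * Real.sqrt (Real.log (1/ε)) / ρ := by
      rw [← hB]; exact hFrob
    have h2 : (1/100:ℝ) * ε * Real.sqrt (Real.log (1/ε)) / ρ ≤ (1/100)^2 := by
      rw [div_le_iff₀ hρ]
      calc (1/100:ℝ) * ε * Real.sqrt (Real.log (1/ε))
          = (1/100) * (ε * Real.sqrt (Real.log (1/ε))) := by ring
        _ ≤ (1/100) * ((1/100) * ρ) := by nlinarith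
        _ = (1/100)^2 * ρ := by ring
    have h3 : Real.sqrt (2 - 2*t^2) ≤ (1/100:ℝ)^2 := h1.trans h2
    calc 2 - 2*t^2 = (Real.sqrt (2 - 2*t^2))^2 := (Real.sq_sqrt hSnn).symm
      _ ≤ ((1/100:ℝ)^2)^2 := pow_le_pow_left₀ (Real.sqrt_nonneg _) h3 2
  have ht99 : (0.99:ℝ) ≤ t := by nlinarith
  -- bounds on u = √y
  set u := Real.sqrt y with hudef
  have hu2 : u^2 = y := Real.sq_sqrt hy.le
  have hu0 : 0 < u := Real.sqrt_pos.mpr hy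
  have hδ : (1/100:ℝ) * ε / ρ ≤ 1/100000 := by
    rw [div_le_iff₀ hρ]; nlinarith
  have habs : |u^2 - t^2| ≤ (1/100) * ε / ρ := by rw [hu2]; exact hyt
  have habs' : -((1/100) * ε / ρ) ≤ u^2 - t^2 ∧ u^2 - t^2 ≤ (1/100) * ε / ρ := abs_le.mp habs
  have hu9 : (0.9:ℝ) ≤ u := by nlinarith [habs'.1, habs'.2]
  have hu11 : u ≤ 1.01 := by nlinarith [habs'.1, habs'.2]
  -- scalar abbreviations
  set s := ρ * α * t / (1 + ρ * t^2) with hsdef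
  set a := (1 + ρ * y) / (ρ * u * α) with hadef
  have hden : (0:ℝ) < 1 + ρ * t^2 := by positivity
  have hD0 : (0:ℝ) < (1 + ρ * t^2) * u := by positivity
  have hD9 : (0.9:ℝ) ≤ (1 + ρ * t^2) * u := by nlinarith
  have hAs : a * s = t * (1 + ρ * u^2) / ((1 + ρ * t^2) * u) := by
    rw [hadef, hsdef, ← hu2]
    field_simp
  set δ := (1/100) * ε / ρ with hδdef
  have hδ0 : 0 < δ := by positivity
  -- |a s - 1| ≤ δ
  have htu : |t - u| ≤ 0.6 * δ := by
    have e : |t - u| * (t + u) = |t^2 - u^2| := by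
      rw [← abs_of_pos (show (0:ℝ) < t + u by nlinarith), ← abs_mul]
      ring_nf
    have h1 : |t^2 - u^2| ≤ δ := by rw [abs_sub_comm]; exact habs
    have h2 : |t - u| * (t + u) ≤ δ := by rw [e]; exact h1
    have h3 : (1.8:ℝ) ≤ t + u := by linarith
    have h4 : |t - u| * 1.8 ≤ |t - u| * (t + u) :=
      mul_le_mul_of_nonneg_left h3 (abs_nonneg _)
    linarith
  have hA1 : |a * s - 1| ≤ δ := by
    have hid : a * s - 1 = ((t - u) * (1 - ρ * t * u)) / ((1 + ρ * t^2) * u) := by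
      rw [hAs]
      field_simp
      ring
    have hρtu : ρ * t * u ≤ 1.01 := by
      have h1 : ρ * t ≤ 1 := mul_le_one₀ hρ1 (by linarith) ht1
      have h2 : ρ * t * u ≤ 1 * 1.01 :=
        mul_le_mul h1 hu11 hu0.le (by norm_num)
      linarith
    have hρtu0 : 0 ≤ ρ * t * u := by positivity
    have h2 : |1 - ρ * t * u| ≤ 1.01 := by
      rw [abs_le]; constructor <;> [linarith; linarith]
    rw [hid, abs_div, abs_of_pos hD0, div_le_iff₀ hD0, abs_mul]
    have h5 : |t - u| * |1 - ρ * t * u| ≤ (0.6 * δ) * 1.01 :=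
      mul_le_mul htu h2 (abs_nonneg _) (by linarith)
    have h6 : δ * 0.9 ≤ δ * ((1 + ρ * t^2) * u) :=
      mul_le_mul_of_nonneg_left hD9 hδ0.le
    linarith
  -- |u - a s t| ≤ 1.2 δ
  have hB2 : |u - a * s * t| ≤ 1.2 * δ := by
    have hid : u - a * s * t = (u^2 - t^2) / ((1 + ρ * t^2) * u) := by
      rw [hAs]
      field_simp
      ring
    rw [hid, abs_div, abs_of_pos hD0, div_le_iff₀ hD0]
    have h6 : 1.2 * δ * 0.9 ≤ 1.2 * δ * ((1 + ρ * t^2) * u) :=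
      mul_le_mul_of_nonneg_left hD9 (by positivity)
    linarith
  -- |a| ≤ 23/ρ
  have ha : |a| ≤ 23 / ρ := by
    have ha0 : 0 < a := by
      rw [hadef]; positivity
    rw [abs_of_pos ha0, hadef, ← hu2, div_le_div_iff₀ (by positivity) hρ]
    have h1 : (0.09:ℝ) ≤ u * α := by
      have := mul_le_mul hu9 hα1 (by norm_num) (by linarith)
      linarith
    have hu2' : u^2 ≤ 1.0201 := by
      have h := pow_le_pow_left₀ hu0.le hu11 2
      norm_num at h
      linarith
    have h3 : (1 + ρ * u^2) * ρ ≤ 2.03 * ρ := by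
      have hmul : ρ * u^2 ≤ u^2 := mul_le_of_le_one_left (sq_nonneg u) hρ1
      have : (1 + ρ * u^2) ≤ 2.03 := by linarith
      exact mul_le_mul_of_nonneg_right this hρ.le
    have h4 : 0 ≤ ρ * (u * α - 0.09) := mul_nonneg hρ.le (by linarith)
    linarith [h3, h4]
  -- main norm estimate in EuclideanSpace
  have main : ∀ V W Z : EuclideanSpace ℝ (Fin d),
      ‖Z - s • (V - t • W)‖ ≤ (1/100) * ε → ‖V‖ = 1 → ‖W‖ = 1 →
      ‖a • Z + u • W - V‖ ≤ 1 * ε / ρ := by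
    intro V W Z hE hV1 hW1
    have hdecomp : a • Z + u • W - V
        = a • (Z - s • (V - t • W)) + (a * s - 1) • V + (u - a * s * t) • W := by
      module
    rw [hdecomp]
    have h1 : ‖a • (Z - s • (V - t • W)) + (a * s - 1) • V + (u - a * s * t) • W‖
        ≤ ‖a • (Z - s • (V - t • W))‖ + ‖(a * s - 1) • V‖ + ‖(u - a * s * t) • W‖ :=
      norm_add₃_le
    have h2 : ‖a • (Z - s • (V - t • W))‖ ≤ (23/ρ) * ((1/100) * ε) := by
      rw [norm_smul, Real.norm_eq_abs]
      exact mul_le_mul ha hE (norm_nonneg _) (by positivity)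
    have h3 : ‖(a * s - 1) • V‖ ≤ δ := by
      rw [norm_smul, Real.norm_eq_abs, hV1, mul_one]; exact hA1
    have h4 : ‖(u - a * s * t) • W‖ ≤ 1.2 * δ := by
      rw [norm_smul, Real.norm_eq_abs, hW1, mul_one]; exact hB2
    have hfin : (23/ρ) * ((1/100) * ε) + δ + 1.2 * δ ≤ 1 * ε / ρ := by
      rw [hδdef]
      have hpos : (0:ℝ) ≤ ε / ρ := by positivity
      have e1 : (23/ρ) * ((1/100) * ε) + (1/100) * ε / ρ + 1.2 * ((1/100) * ε / ρ)
          = (25.2/100) * (ε/ρ) := by ring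
      have e2 : 1 * ε / ρ = 1 * (ε/ρ) := by ring
      linarith
    linarith
  have key := main (WithLp.toLp 2 v) (WithLp.toLp 2 w) (WithLp.toLp 2 z)
    (by rw [← euclNorm_eq_norm]; simpa using hz)
    (by rw [← euclNorm_eq_norm]; simpa using hv) (by rw [← euclNorm_eq_norm]; simpa using hw)
  rw [← euclNorm_eq_norm] at key
  simpa using key
end
end
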